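/- arXiv:2104.04226 — 8 statements merged into one kernel-verified Lean document; each statement's English description precedes it below -/
import Mathlib

section
/- Let P be a polynomial of degree n having all its zeros in |z| ≥ 1; that is, P(z) = α_n ∏_{j=1}^n (z − b_j) = α_0 + α_1 z + ⋯ + α_n z^n with α_n ≠ 0 and |b_j| ≥ 1 for j = 1, …, n. Then for every z with |z| = 1, |P′(z)| ≤ (1/2)·[ n − (|P(z)|²/M(P,1)²)·(|α_0| − |α_n|)/(|α_0| + |α_n|) ]·M(P,1). -/
open Finset
open Polynomial



lemma tanh_subadd {ι : Type*} (s : Finset ι) (x : ι → ℝ) (hx : ∀ j ∈ s, 1 ≤ x j) :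
    ((∏ j ∈ s, x j) - 1) / ((∏ j ∈ s, x j) + 1) ≤ ∑ j ∈ s, (x j - 1) / (x j + 1) := by
  classical
  induction s using Finset.cons_induction with
  | empty => simp
  | cons a s ha ih =>
    rw [Finset.prod_cons, Finset.sum_cons]
    have hxs : ∀ j ∈ s, 1 ≤ x j := fun j hj => hx j (Finset.mem_cons_of_mem hj)
    have hc : (1:ℝ) ≤ ∏ j ∈ s, x j := by
      calc (1:ℝ) = ∏ _j ∈ s, 1 := by simp
      _ ≤ ∏ j ∈ s, x j := Finset.prod_le_prod (by intros; norm_num) hxs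
    have hA : (1:ℝ) ≤ x a := hx a (Finset.mem_cons_self a s)
    have ihs := ih hxs
    set c := ∏ j ∈ s, x j
    have key : (x a * c - 1) / (x a * c + 1) ≤ (x a - 1) / (x a + 1) + (c - 1) / (c + 1) := by
      rw [div_add_div _ _ (by nlinarith : (x a + 1) ≠ 0) (by nlinarith : (c + 1) ≠ 0),
        div_le_div_iff₀ (by nlinarith) (by positivity)]
      nlinarith [mul_nonneg (mul_nonneg (sub_nonneg.2 hA) (sub_nonneg.2 hc)) (by nlinarith : (0:ℝ) ≤ x a * c - 1)]
    linarith

lemma re_div_le {z β : ℂ} (hz : ‖z‖ = 1) (hβ : 1 ≤ ‖β‖) (hne : z ≠ β) :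
    (z / (z - β)).re ≤ 1 / (1 + ‖β‖) := by
  have hd : z - β ≠ 0 := sub_ne_zero.2 hne
  have hD : 0 < Complex.normSq (z - β) := Complex.normSq_pos.2 hd
  have hz2 : z.re ^ 2 + z.im ^ 2 = 1 := by
    have := Complex.sq_norm z
    rw [hz] at this
    simpa [Complex.normSq_apply, sq] using this.symm
  have hβ2 : β.re ^ 2 + β.im ^ 2 = (‖β‖) ^ 2 := by
    simpa [Complex.normSq_apply, sq] using (Complex.sq_norm β).symm
  have ht : -(‖β‖) ≤ z.re * β.re + z.im * β.im := by
    have h1 : |(z * (starRingEnd ℂ) β).re| ≤ ‖z * (starRingEnd ℂ) β‖ :=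
      Complex.abs_re_le_norm _
    have h2 : ‖z * (starRingEnd ℂ) β‖ = ‖β‖ := by
      simp [norm_mul, hz]
    have h3 : (z * (starRingEnd ℂ) β).re = z.re * β.re + z.im * β.im := by
      simp [Complex.mul_re, Complex.conj_re, Complex.conj_im]
    rw [h2, h3] at h1
    linarith [abs_le.1 h1 |>.1]
  rw [Complex.div_re, ← add_div, div_le_div_iff₀ hD (by positivity)]
  have hnsq : Complex.normSq (z - β) = 1 + (‖β‖)^2 - 2*(z.re*β.re + z.im*β.im) := by
    simp [Complex.normSq_apply, Complex.sub_re, Complex.sub_im]; nlinarith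
  rw [hnsq]
  have hb0 : 0 ≤ ‖β‖ := (norm_nonneg β)
  simp only [Complex.sub_re, Complex.sub_im]
  nlinarith [sq_nonneg (‖β‖ - 1)]


lemma derivative_prod_XsubC {ι : Type*} [DecidableEq ι] (s : Finset ι) (g : ι → ℂ) :
    derivative (∏ j ∈ s, (X - C (g j))) = ∑ i ∈ s, ∏ j ∈ s.erase i, (X - C (g j)) := by
  induction s using Finset.induction_on with
  | empty => simp
  | insert a s ha ih =>
    rw [Finset.prod_insert ha, derivative_mul, derivative_X_sub_C, ih, Finset.sum_insert ha,
      Finset.erase_insert ha, one_mul]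
    rw [Finset.mul_sum]
    congr 1
    refine Finset.sum_congr rfl fun i hi => ?_
    rw [Finset.erase_insert_of_ne (by rintro rfl; exact ha hi), Finset.prod_insert
      (fun h => ha (Finset.mem_of_mem_erase h))]

lemma eval_deriv_CmulProd (k : ℕ) (c : ℂ) (β : Fin k → ℂ) (z : ℂ) :
    eval z (derivative (C c * ∏ j, (X - C (β j)))) =
      c * ∑ i, ∏ j ∈ Finset.univ.erase i, (z - β j) := by
  rw [derivative_C_mul, derivative_prod_XsubC, eval_mul, eval_C, eval_finset_sum]
  simp [eval_prod]

lemma eval_CmulProd (k : ℕ) (c : ℂ) (β : Fin k → ℂ) (z : ℂ) :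
    eval z (C c * ∏ j, (X - C (β j))) = c * ∏ j, (z - β j) := by
  simp [eval_prod]

-- S-form identities when z avoids all roots
lemma zderiv_eq (k : ℕ) (c : ℂ) (β : Fin k → ℂ) (z : ℂ) (hne : ∀ j, z ≠ β j) :
    z * eval z (derivative (C c * ∏ j, (X - C (β j)))) =
      eval z (C c * ∏ j, (X - C (β j))) * ∑ i, z / (z - β i) := by
  rw [eval_deriv_CmulProd, eval_CmulProd, Finset.mul_sum, Finset.mul_sum, Finset.mul_sum]
  refine Finset.sum_congr rfl fun i _ => ?_
  have h0 : z - β i ≠ 0 := sub_ne_zero.2 (hne i)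
  have : (∏ j, (z - β j)) = (∏ j ∈ Finset.univ.erase i, (z - β j)) * (z - β i) :=
    (Finset.prod_erase_mul _ _ (Finset.mem_univ i)).symm
  rw [this]
  field_simp

section
variable (k : ℕ) (c : ℂ) (β : Fin k → ℂ) (z : ℂ)

lemma normSq_sub_normSq (S : ℂ) (r : ℝ) :
    (‖(r:ℂ) - S‖)^2 - (‖S‖)^2 = r^2 - 2*r*S.re := by
  rw [Complex.sq_norm, Complex.sq_norm]
  simp [Complex.normSq_apply, Complex.sub_re, Complex.sub_im]
  ring

lemma re_S_le (hz : ‖z‖ = 1) (hβ : ∀ j, 1 ≤ ‖β j‖)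
    (hne : ∀ j, z ≠ β j) :
    (∑ i, z / (z - β i)).re ≤ ∑ i, 1 / (1 + ‖β i‖) := by
  rw [Complex.re_sum]
  exact Finset.sum_le_sum fun i _ => re_div_le hz (hβ i) (hne i)

lemma sigma_le_half (hβ : ∀ j, 1 ≤ ‖β j‖) :
    ∑ i, 1 / (1 + ‖β i‖) ≤ (k:ℝ)/2 := by
  calc ∑ i, 1 / (1 + ‖β i‖) ≤ ∑ _i : Fin k, (1:ℝ)/2 :=
        Finset.sum_le_sum fun i _ => by
          rw [div_le_div_iff₀ (by linarith [hβ i]) (by norm_num)]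
          linarith [hβ i]
    _ = (k:ℝ)/2 := by simp [Finset.sum_const]; ring

lemma keyIneq (hz : ‖z‖ = 1) (hβ : ∀ j, 1 ≤ ‖β j‖) :
    ‖eval z (derivative (C c * ∏ j, (X - C (β j))))‖ ≤
      ‖(k:ℂ) * eval z (C c * ∏ j, (X - C (β j)))
        - z * eval z (derivative (C c * ∏ j, (X - C (β j))))‖ := by
  by_cases hcase : ∀ j, z ≠ β j
  · have hzd := zderiv_eq k c β z hcase
    set Q := eval z (C c * ∏ j, (X - C (β j)))
    set D := eval z (derivative (C c * ∏ j, (X - C (β j))))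
    set S := ∑ i, z / (z - β i)
    have hD : ‖D‖ = ‖Q * S‖ := by
      rw [← hzd, norm_mul, hz, one_mul]
    have hB : (k:ℂ) * Q - z * D = Q * ((k:ℂ) - S) := by rw [hzd]; ring
    rw [hD, hB, norm_mul, norm_mul]
    refine mul_le_mul_of_nonneg_left ?_ (norm_nonneg Q)
    have hre : S.re ≤ (k:ℝ)/2 := (re_S_le k β z hz hβ hcase).trans (sigma_le_half k β hβ)
    have h2 : (‖S‖)^2 ≤ (‖(k:ℂ) - S‖)^2 := by
      have := normSq_sub_normSq S (k:ℝ)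
      push_cast at this ⊢
      nlinarith [sq_nonneg ((k:ℝ) - 2*S.re)]
    nlinarith [norm_nonneg S, norm_nonneg ((k:ℂ) - S)]
  · push_neg at hcase
    obtain ⟨j, hj⟩ := hcase
    set D := eval z (derivative (C c * ∏ j, (X - C (β j)))) with hDdef
    have hQ : eval z (C c * ∏ i, (X - C (β i))) = 0 := by
      rw [eval_CmulProd]
      rw [Finset.prod_eq_zero (Finset.mem_univ j) (by rw [hj, sub_self])]
      ring
    rw [hQ, mul_zero, zero_sub, norm_neg, norm_mul, hz, one_mul]

lemma key2 (hz : ‖z‖ = 1) (hβ : ∀ j, 1 ≤ ‖β j‖) :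
    (‖eval z (C c * ∏ j, (X - C (β j)))‖)^2
        * ((k:ℝ) * ((k:ℝ) - 2 * ∑ j, 1 / (1 + ‖β j‖))) ≤
      (‖(k:ℂ) * eval z (C c * ∏ j, (X - C (β j)))
        - z * eval z (derivative (C c * ∏ j, (X - C (β j))))‖)^2
      - (‖eval z (derivative (C c * ∏ j, (X - C (β j))))‖)^2 := by
  by_cases hcase : ∀ j, z ≠ β j
  · have hzd := zderiv_eq k c β z hcase
    set Q := eval z (C c * ∏ j, (X - C (β j)))
    set D := eval z (derivative (C c * ∏ j, (X - C (β j))))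
    set S := ∑ i, z / (z - β i)
    have hD : ‖D‖ = ‖Q‖ * ‖S‖ := by
      rw [← norm_mul, ← hzd, norm_mul, hz, one_mul]
    have hB : (k:ℂ) * Q - z * D = Q * ((k:ℂ) - S) := by rw [hzd]; ring
    rw [hD, hB, norm_mul]
    have hre : S.re ≤ ∑ i, 1 / (1 + ‖β i‖) := re_S_le k β z hz hβ hcase
    have hns := normSq_sub_normSq S (k:ℝ)
    push_cast at hns
    have expand : (‖Q‖ * ‖(k:ℂ) - S‖)^2
        - (‖Q‖ * ‖S‖)^2
        = (‖Q‖)^2 * ((k:ℝ)^2 - 2*(k:ℝ)*S.re) := by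
      rw [mul_pow, mul_pow, ← mul_sub, hns]
    rw [expand]
    nlinarith [mul_le_mul_of_nonneg_left hre
      (show (0:ℝ) ≤ 2*(k:ℝ)*(‖Q‖)^2 by positivity)]
  · push_neg at hcase
    obtain ⟨j, hj⟩ := hcase
    have hQ : eval z (C c * ∏ i, (X - C (β i))) = 0 := by
      rw [eval_CmulProd]
      rw [Finset.prod_eq_zero (Finset.mem_univ j) (by rw [hj, sub_self])]
      ring
    set D := eval z (derivative (C c * ∏ j, (X - C (β j)))) with hDdef
    rw [hQ, mul_zero, zero_sub, norm_neg, norm_mul, hz, one_mul]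
    simp
end


lemma root_form (q : ℂ[X]) :
    ∃ (m : ℕ) (β : Fin m → ℂ), m = q.natDegree ∧ (∀ i, β i ∈ q.roots) ∧
      q = C q.leadingCoeff * ∏ i, (X - C (β i)) := by
  classical
  have hsplit : q.Splits := IsAlgClosed.splits q
  have hform := hsplit.eq_prod_roots
  refine ⟨q.roots.toList.length, fun i => q.roots.toList.get i, ?_, ?_, ?_⟩
  · rw [Multiset.length_toList, (Polynomial.splits_iff_card_roots).1 hsplit]
  · intro i
    have : q.roots.toList.get i ∈ q.roots.toList := q.roots.toList.get_mem i
    rwa [Multiset.mem_toList] at this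
  · conv_lhs => rw [hform]
    congr 1
    have h1 : q.roots = (q.roots.toList : Multiset ℂ) := (Multiset.coe_toList _).symm
    conv_lhs => rw [h1]
    rw [show ((q.roots.toList : Multiset ℂ).map fun a => X - C a)
        = ((q.roots.toList.map fun a => X - C a : List ℂ[X]) : Multiset ℂ[X]) from rfl]
    rw [Multiset.prod_coe]
    conv_lhs => rw [← List.ofFn_get q.roots.toList]
    rw [List.map_ofFn, List.prod_ofFn]
    simp [Function.comp]

lemma sphere_infinite : (Metric.sphere (0:ℂ) 1).Infinite := by
  have hinj : Set.InjOn (fun t : ℝ => Complex.exp (t * Complex.I)) (Set.Icc 0 1) := by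
    intro a ha b hb hab
    simp only at hab
    obtain ⟨k, hk⟩ := Complex.exp_eq_exp_iff_exists_int.1 hab
    have him := congrArg Complex.im hk
    simp [Complex.mul_im, Complex.ofReal_re, Complex.ofReal_im] at him
    -- him : a = b + k * 2π (in some form)
    have hpi := Real.pi_gt_three
    have hk0 : k = 0 := by
      by_contra hk0
      have h1 : (1:ℝ) ≤ |(k:ℝ)| := by exact_mod_cast Int.one_le_abs (by exact_mod_cast hk0)
      have hab' : |a - b| ≤ 1 := by
        rw [abs_le]; exact ⟨by linarith [ha.1, ha.2, hb.1, hb.2], by linarith [ha.1, ha.2, hb.1, hb.2]⟩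
      have : a - b = (k:ℝ) * (2 * Real.pi) := by linarith
      rw [this, abs_mul, abs_of_pos (by linarith : (0:ℝ) < 2 * Real.pi)] at hab'
      nlinarith
    rw [hk0] at him
    simp at him
    linarith
  have himg : (fun t : ℝ => Complex.exp (t * Complex.I)) '' (Set.Icc 0 1) ⊆ Metric.sphere (0:ℂ) 1 := by
    rintro w ⟨t, _, rfl⟩
    simp [Complex.dist_eq, Complex.norm_exp_ofReal_mul_I]
  exact ((Set.Icc_infinite (by norm_num)).image hinj).mono himg

noncomputable def MSup (f : ℂ → ℂ) : ℝ :=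
  sSup ((fun w => ‖f w‖) '' Metric.sphere (0 : ℂ) 1)

set_option maxHeartbeats 1600000 in
theorem stmt5 (n : ℕ) (hn : 0 < n)
    (b : Fin n → ℂ) (hb : ∀ j, 1 ≤ ‖b j‖)
    (α : ℕ → ℂ) (hαn : α n ≠ 0)
    (P : ℂ → ℂ)
    (hP : ∀ z, P z = α n * ∏ j, (z - b j))
    (hPsum : ∀ z, P z = ∑ i ∈ Finset.range (n + 1), α i * z ^ i)
    (z : ℂ) (hz : ‖z‖ = 1) :
    ‖deriv P z‖ ≤
      (1 / 2) * ((n : ℝ)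
          - ((‖P z‖) ^ 2 / (MSup P) ^ 2)
              * ((‖α 0‖ - ‖α n‖)
                  / (‖α 0‖ + ‖α n‖))) * MSup P := by
  classical
  have habs : ∀ w : ℂ, ‖w‖ = ‖w‖ := fun w => rfl
  set p : ℂ[X] := C (α n) * ∏ j, (X - C (b j)) with hpdef
  have hPeval : ∀ w, P w = eval w p := fun w => by rw [hP w, hpdef, eval_CmulProd]
  have hPfun : P = fun w => eval w p := funext hPeval
  have hderiv : deriv P z = eval z (derivative p) := by rw [hPfun, Polynomial.deriv]
  -- degree and leading coefficient of p
  have hmon : (∏ j, (X - C (b j)) : ℂ[X]).Monic :=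
    monic_prod_of_monic _ _ fun i _ => monic_X_sub_C _
  have hdegp : p.natDegree = n := by
    rw [hpdef, natDegree_C_mul hαn, natDegree_prod_of_monic _ _ fun i _ => monic_X_sub_C _]
    simp [natDegree_X_sub_C]
  have hleadp : p.leadingCoeff = α n := by
    rw [hpdef, leadingCoeff_mul, leadingCoeff_C, hmon.leadingCoeff, mul_one]
  set M := MSup P with hMdef
  -- M facts
  have hPcont : Continuous fun w => ‖P w‖ := by
    rw [hPfun]; exact continuous_norm.comp (p.continuous_aeval)
  have hcomp : IsCompact ((fun w => ‖P w‖) '' Metric.sphere (0:ℂ) 1) :=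
    (isCompact_sphere 0 1).image hPcont
  have hbdd : BddAbove ((fun w => ‖P w‖) '' Metric.sphere (0:ℂ) 1) :=
    hcomp.bddAbove
  have hsph : ∀ w : ℂ, ‖w‖ = 1 → ‖P w‖ ≤ M := by
    intro w hw
    refine le_csSup hbdd ⟨w, ?_, rfl⟩
    simp [Complex.dist_eq, hw]
  have hMpos : 0 < M := by
    obtain ⟨w, hwsph, hwb⟩ : ∃ w ∈ Metric.sphere (0:ℂ) 1, ∀ j, w ≠ b j := by
      have hfin : (Set.range b).Finite := Set.finite_range b
      obtain ⟨w, hw⟩ := (sphere_infinite.diff hfin).nonempty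
      exact ⟨w, hw.1, fun j hj => hw.2 ⟨j, hj.symm⟩⟩
    have hw1 : ‖w‖ = 1 := by simpa [Complex.dist_eq] using hwsph
    have hPw : P w ≠ 0 := by
      rw [hP w]
      exact mul_ne_zero hαn (Finset.prod_ne_zero_iff.2 fun j _ => sub_ne_zero.2 (hwb j))
    calc (0:ℝ) < ‖P w‖ := norm_pos_iff.2 hPw
      _ ≤ M := hsph w hw1
  have hPzM : ‖P z‖ ≤ M := hsph z hz
  -- coefficient ratio
  set c0 : ℝ := ∏ j, ‖b j‖ with hc0def
  have hc01 : (1:ℝ) ≤ c0 := by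
    rw [hc0def]
    calc (1:ℝ) = ∏ _j : Fin n, 1 := by simp
      _ ≤ ∏ j, ‖b j‖ := Finset.prod_le_prod (by intros; norm_num) (fun j _ => hb j)
  have hα0 : ‖α 0‖ = ‖α n‖ * c0 := by
    have h0 : α 0 = P 0 := by
      rw [hPsum 0]
      rw [Finset.sum_eq_single 0]
      · simp
      · intro i _ hi
        simp [zero_pow hi]
      · simp
    rw [h0, hP 0]
    rw [norm_mul, norm_prod]
    congr 1
    refine Finset.prod_congr rfl fun j _ => ?_
    simp
  set r : ℝ := (c0 - 1) / (c0 + 1) with hrdef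
  have hr0 : 0 ≤ r := div_nonneg (by linarith) (by linarith)
  have hr1 : r ≤ 1 := by
    rw [hrdef, div_le_one (by linarith)]; linarith
  have hrr : (‖α 0‖ - ‖α n‖) / (‖α 0‖ + ‖α n‖) = r := by
    rw [hα0, hrdef]
    have ha : 0 < ‖α n‖ := norm_pos_iff.2 hαn
    rw [div_eq_div_iff (by nlinarith) (by nlinarith)]
    ring
  -- main quantities
  set A := ‖eval z (derivative p)‖ with hAdef
  set v := (n:ℂ) * P z - z * eval z (derivative p) with hvdef
  set B := ‖v‖ with hBdef
  have hA0 : 0 ≤ A := norm_nonneg _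
  have hB0 : 0 ≤ B := norm_nonneg _
  -- the lambda step
  have hstep : ∀ μ : ℂ, 1 < ‖μ‖ →
      A ≤ ‖v + (n:ℂ) * μ * (M:ℂ)‖ := by
    intro μ hμ
    set q : ℂ[X] := p + C (μ * (M:ℂ)) with hqdef
    have hqdeg : q.natDegree = n := by rw [hqdef, natDegree_add_C, hdegp]
    have hpc : p.coeff n = α n := by rw [← hleadp, Polynomial.leadingCoeff, hdegp]
    have hqlead : q.leadingCoeff = α n := by
      rw [Polynomial.leadingCoeff, hqdeg, hqdef, coeff_add, coeff_C,
        if_neg hn.ne', add_zero, hpc]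
    have hroots : ∀ w ∈ q.roots, 1 < ‖w‖ := by
      intro w hw
      have hq0 : q ≠ 0 := fun h => hαn (by rw [← hqlead, h, leadingCoeff_zero])
      have hwroot : eval w q = 0 := (Polynomial.isRoot_of_mem_roots hw)
      have hPw : P w = -(μ * (M:ℂ)) := by
        have : eval w p + μ * (M:ℂ) = 0 := by
          rw [← eval_C (a := μ * (M:ℂ)) (x := w), ← eval_add, ← hqdef, hwroot]
        rw [hPeval w]; linear_combination this
      by_contra hle
      push_neg at hle
      have hmax : ‖P w‖ ≤ M := by
        have hdiff : DiffContOnCl ℂ P (Metric.ball (0:ℂ) 1) := by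
          rw [hPfun]
          exact (Polynomial.differentiable p).diffContOnCl
        have := Complex.norm_le_of_forall_mem_frontier_norm_le
          (Metric.isBounded_ball (x := (0:ℂ)) (r := 1)) hdiff
          (fun x hx => by
            rw [frontier_ball (0:ℂ) one_ne_zero] at hx
            have hx1 : ‖x‖ = 1 := by simpa [Complex.dist_eq] using hx
            rw [← habs]
            exact hsph x hx1)
          (z := w)
          (by
            rw [closure_ball (0:ℂ) one_ne_zero]
            simpa [Complex.dist_eq] using hle)
        rwa [habs]
      rw [hPw, norm_neg, norm_mul, Complex.norm_real, Real.norm_eq_abs, abs_of_pos hMpos] at hmax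
      nlinarith
    obtain ⟨m, β, hm, hβmem, hqform⟩ := root_form q
    rw [hqlead] at hqform
    have hβ : ∀ i, 1 ≤ ‖β i‖ := fun i => le_of_lt (hroots _ (hβmem i))
    have hkey := keyIneq m (α n) β z hz hβ
    rw [← hqform] at hkey
    have hmn : m = n := by rw [hm, hqdeg]
    subst hmn
    have hqeval : eval z q = P z + μ * (M:ℂ) := by
      rw [hqdef, eval_add, eval_C, hPeval z]
    have hqD : eval z (derivative q) = eval z (derivative p) := by
      rw [hqdef, derivative_add, derivative_C, add_zero]
    rw [hqeval, hqD] at hkey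
    calc A ≤ ‖(m:ℂ) * (P z + μ * (M:ℂ)) - z * eval z (derivative p)‖ := hkey
      _ = ‖v + (m:ℂ) * μ * (M:ℂ)‖ := by rw [hvdef]; ring_nf
  -- step (a): B ≤ n*M
  have hBnM : B ≤ (n:ℝ) * M := by
    by_contra hcon
    push_neg at hcon
    have hnM : 0 < (n:ℝ) * M := by positivity
    have hv0 : v ≠ 0 := by
      intro h
      rw [hBdef, h, norm_zero] at hcon
      linarith
    set μ : ℂ := -v / ((n:ℂ) * (M:ℂ)) with hμdef
    have hnM0 : ((n:ℂ) * (M:ℂ)) ≠ 0 := by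
      apply mul_ne_zero
      · exact_mod_cast (Nat.cast_ne_zero (R := ℂ)).2 hn.ne'
      · exact_mod_cast Complex.ofReal_ne_zero.2 hMpos.ne'
    have hμabs : 1 < ‖μ‖ := by
      rw [hμdef, norm_div, norm_neg, norm_mul]
      rw [Complex.norm_natCast, Complex.norm_real, Real.norm_eq_abs, abs_of_pos hMpos]
      rw [lt_div_iff₀ hnM]
      simpa [hBdef] using hcon
    have := hstep μ hμabs
    have hcancel : v + (n:ℂ) * μ * (M:ℂ) = 0 := by
      have hinv : (n:ℂ) * (M:ℂ) * ((n:ℂ) * (M:ℂ))⁻¹ = 1 := mul_inv_cancel₀ hnM0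
      rw [hμdef]
      field_simp
      linear_combination (-v) * hinv
    rw [hcancel, norm_zero] at this
    have hA00 : A = 0 := le_antisymm this hA0
    have hD0 : eval z (derivative p) = 0 := by
      rwa [hAdef, norm_eq_zero] at hA00
    have hvP : v = (n:ℂ) * P z := by rw [hvdef, hD0]; ring
    have : B = (n:ℝ) * ‖P z‖ := by
      rw [hBdef, hvP, norm_mul, Complex.norm_natCast]
    nlinarith
  -- step (b): A + B ≤ n*M
  have hAB : A + B ≤ (n:ℝ) * M := by
    refine le_of_forall_pos_le_add fun ε hε => ?_
    set u : ℂ := if v = 0 then 1 else v / ((B:ℝ) : ℂ) with hudef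
    have hu1 : ‖u‖ = 1 := by
      rw [hudef]
      split_ifs with h
      · simp
      · have hB0' : B ≠ 0 := by
          rw [hBdef]; exact fun hh => h (norm_eq_zero.1 hh)
        rw [norm_div, Complex.norm_real, Real.norm_eq_abs, abs_of_nonneg hB0, hBdef, div_self]
        exact fun hh => hB0' (by rw [hBdef]; exact hh)
    have hvu : v = ((B:ℝ) : ℂ) * u := by
      rw [hudef]
      split_ifs with h
      · rw [h, hBdef, h, norm_zero]; simp
      · have hB0' : (B:ℝ) ≠ 0 := by
          rw [hBdef]; exact fun hh => h (norm_eq_zero.1 hh)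
        have hB0c : ((B:ℝ):ℂ) ≠ 0 := Complex.ofReal_ne_zero.2 hB0'
        field_simp
    set δ : ℝ := ε / ((n:ℝ) * M) with hδdef
    have hnM : 0 < (n:ℝ) * M := by positivity
    have hδpos : 0 < δ := div_pos hε hnM
    set μ : ℂ := -(((1 + δ : ℝ)) : ℂ) * u with hμdef
    have hμabs : 1 < ‖μ‖ := by
      rw [hμdef, norm_mul, norm_neg, Complex.norm_real, Real.norm_eq_abs, hu1, mul_one,
        abs_of_pos (by linarith)]
      linarith
    have hkey := hstep μ hμabs
    have heq : v + (n:ℂ) * μ * (M:ℂ) = (((B - (1 + δ) * ((n:ℝ) * M)) : ℝ) : ℂ) * u := by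
      rw [hvu, hμdef]
      push_cast
      ring
    rw [heq, norm_mul, hu1, mul_one, Complex.norm_real, Real.norm_eq_abs] at hkey
    have habs' : |B - (1 + δ) * ((n:ℝ) * M)| = (1 + δ) * ((n:ℝ) * M) - B := by
      rw [abs_of_nonpos]
      · ring
      · nlinarith
    rw [habs'] at hkey
    have hδM : δ * ((n:ℝ) * M) = ε := by
      rw [hδdef]; field_simp
    nlinarith
  -- step (c): refined lower bound on B² - A²
  set σ : ℝ := ∑ j, 1 / (1 + ‖b j‖) with hσdef
  have hσr : r ≤ (n:ℝ) - 2 * σ := by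
    have htanh := tanh_subadd Finset.univ (fun j => ‖b j‖) (fun j _ => hb j)
    have heach : ∀ j : Fin n, (‖b j‖ - 1) / (‖b j‖ + 1)
        = 1 - 2 * (1 / (1 + ‖b j‖)) := by
      intro j
      have h1 : ‖b j‖ + 1 ≠ 0 := by nlinarith [hb j]
      field_simp
      ring
    rw [Finset.sum_congr rfl (fun j _ => heach j)] at htanh
    rw [Finset.sum_sub_distrib] at htanh
    simp only [Finset.sum_const, Finset.card_univ, Fintype.card_fin, nsmul_eq_mul, mul_one] at htanh
    rw [← Finset.mul_sum] at htanh
    rw [hrdef, hσdef, hc0def]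
    linarith [htanh]
  have hL2 : (‖P z‖)^2 * ((n:ℝ) * r) ≤ B^2 - A^2 := by
    have hk2 := key2 n (α n) b z hz hb
    rw [← hpdef] at hk2
    rw [← hPeval z] at hk2
    have h1 : (‖P z‖)^2 * ((n:ℝ) * r) ≤
        (‖P z‖)^2 * ((n:ℝ) * ((n:ℝ) - 2 * σ)) := by
      apply mul_le_mul_of_nonneg_left _ (by positivity)
      apply mul_le_mul_of_nonneg_left _ (by positivity)
      exact hσr
    calc (‖P z‖)^2 * ((n:ℝ) * r)
        ≤ (‖P z‖)^2 * ((n:ℝ) * ((n:ℝ) - 2 * σ)) := h1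
      _ ≤ B^2 - A^2 := by
          rw [hBdef, hAdef, hvdef, hσdef]
          exact hk2
  have hBA : A ≤ B := by nlinarith [mul_nonneg (mul_nonneg (sq_nonneg (‖P z‖)) (Nat.cast_nonneg n : (0:ℝ) ≤ n)) hr0]
  -- final combination
  have hfin : 2 * A * M ≤ (n:ℝ) * M * M - (‖P z‖)^2 * r := by
    rcases eq_or_lt_of_le (by linarith : (0:ℝ) ≤ A + B) with hAB0 | hAB0
    · have hA00 : A = 0 := by linarith
      have hPz2 : (‖P z‖)^2 * r ≤ M * M := by
        nlinarith [norm_nonneg (P z)]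
      have h1n : (1:ℝ) ≤ (n:ℝ) := by exact_mod_cast hn
      nlinarith
    · have h1 : (‖P z‖)^2 * ((n:ℝ) * r) ≤ (B - A) * (A + B) := by nlinarith
      have h2 : (B - A) * (A + B) ≤ (B - A) * ((n:ℝ) * M) :=
        mul_le_mul_of_nonneg_left hAB (by linarith)
      have h3 : (‖P z‖)^2 * ((n:ℝ) * r) ≤ (B - A) * ((n:ℝ) * M) := le_trans h1 h2
      have hnpos : (0:ℝ) < (n:ℝ) := by exact_mod_cast hn
      have h4 : (‖P z‖)^2 * r ≤ (B - A) * M := by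
        have := h3
        rw [show (‖P z‖)^2 * ((n:ℝ) * r) = (n:ℝ) * ((‖P z‖)^2 * r) by ring,
          show (B - A) * ((n:ℝ) * M) = (n:ℝ) * ((B - A) * M) by ring] at this
        exact le_of_mul_le_mul_left this hnpos
      nlinarith
  rw [hderiv, hrr]
  rw [← hAdef]
  calc A = (2 * A * M) / (2 * M) := by field_simp
    _ ≤ ((n:ℝ) * M * M - (‖P z‖)^2 * r) / (2 * M) := by
        apply div_le_div_of_nonneg_right hfin (by linarith) |>.trans_eq rfl
    _ = (1/2) * ((n:ℝ) - ‖P z‖^2 / M^2 * r) * M := by field_simp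
end

section
/- Let 0 < k ≤ 1 and suppose R ∈ R_n has all its zeros in |z| ≤ k; that is, R(z) = P(z)/W(z) with P(z) = α_m ∏_{j=1}^m (z − b_j), α_m ≠ 0, m ≤ n, and |b_j| ≤ k ≤ 1 for j = 1, …, m. Then for every z with |z| = 1, |R′(z)| ≥ (1/2)·[ |B′(z)| + (2m − n(1+k))/(1+k) + 2·( Σ_{j=1}^m 1/(1+|b_j|) − m/(1+k) ) ]·|R(z)|. -/
open Finset

lemma aux_logDeriv_sub_const (c z : ℂ) : logDeriv (fun w => w - c) z = 1/(z - c) := by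
  simp [logDeriv_apply]

lemma aux_pole_abs_eq {z : ℂ} (a : ℂ) (hz : ‖z‖ = 1) :
    ‖1 - (starRingEnd ℂ) a * z‖ = ‖z - a‖ := by
  have h1 : z * (starRingEnd ℂ) z = ((Complex.normSq z : ℝ) : ℂ) := Complex.mul_conj z
  have h2 : Complex.normSq z = 1 := by rw [Complex.normSq_eq_norm_sq, hz]; norm_num
  have : 1 - (starRingEnd ℂ) a * z = z * (starRingEnd ℂ) (z - a) := by
    rw [map_sub, mul_sub, h1, h2]; push_cast; ring
  rw [this, norm_mul, hz, one_mul, Complex.norm_conj]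

lemma aux_zero_re {z b : ℂ} (hz : ‖z‖ = 1) (hb1 : ‖b‖ ≤ 1)
    (hzb : z - b ≠ 0) : 1/(1 + ‖b‖) ≤ (z/(z - b)).re := by
  have hD : 0 < Complex.normSq (z - b) := Complex.normSq_pos.mpr hzb
  have h1 : z.re * z.re + z.im * z.im = 1 := by
    have : Complex.normSq z = 1 := by rw [Complex.normSq_eq_norm_sq, hz]; norm_num
    simpa [Complex.normSq_apply] using this
  have ht : |z.re * b.re + z.im * b.im| ≤ ‖b‖ := by
    have := Complex.abs_re_le_norm (z * (starRingEnd ℂ) b)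
    simpa [Complex.mul_re, norm_mul, Complex.norm_conj, hz] using this
  have hβ : 0 ≤ ‖b‖ := norm_nonneg b
  have hre : (z/(z - b)).re = (1 - (z.re*b.re + z.im*b.im)) / Complex.normSq (z - b) := by
    rw [Complex.div_re, ← add_div]
    congr 1
    simp only [Complex.sub_re, Complex.sub_im]
    nlinarith [h1]
  have hDe : Complex.normSq (z - b) =
      1 - 2*(z.re*b.re + z.im*b.im) + ‖b‖ ^ 2 := by
    have hb2 : Complex.normSq b = ‖b‖ ^ 2 := (Complex.sq_norm b).symm
    simp only [Complex.normSq_apply, Complex.sub_re, Complex.sub_im] at *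
    nlinarith [h1]
  rw [hre, div_le_div_iff₀ (by positivity) hD]
  have ht1 : -(‖b‖) ≤ z.re*b.re + z.im*b.im := neg_le_of_abs_le ht
  nlinarith [mul_nonneg (sub_nonneg.mpr hb1)
    (by linarith : (0:ℝ) ≤ ‖b‖ + (z.re*b.re + z.im*b.im))]

lemma aux_pole_re {z a : ℂ} (hz : ‖z‖ = 1) (hd : z - a ≠ 0) :
    (z/(z - a)).re = (1 - (Complex.normSq a - 1)/Complex.normSq (z - a))/2 := by
  have hD : 0 < Complex.normSq (z - a) := Complex.normSq_pos.mpr hd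
  have h1 : z.re * z.re + z.im * z.im = 1 := by
    have : Complex.normSq z = 1 := by rw [Complex.normSq_eq_norm_sq, hz]; norm_num
    simpa [Complex.normSq_apply] using this
  rw [Complex.div_re]
  simp only [Complex.normSq_apply, Complex.sub_re, Complex.sub_im] at *
  have hD' := hD.ne'
  have key : z.re * (z.re - a.re) + z.im * (z.im - a.im)
      = ((z.re - a.re) * (z.re - a.re) + (z.im - a.im) * (z.im - a.im)
        - (a.re * a.re + a.im * a.im - 1)) / 2 := by
    linear_combination (1/2 : ℝ) * h1
  rw [← add_div, key, div_div, mul_comm (2:ℝ), ← div_div, sub_div, div_self hD']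

lemma aux_pole_logDeriv {z a : ℂ} (hz : ‖z‖ = 1) (ha : 1 < ‖a‖) :
    ‖logDeriv (fun w => (1 - (starRingEnd ℂ) a * w)/(w - a)) z‖
      = (Complex.normSq a - 1)/Complex.normSq (z - a) := by
  have hd : z - a ≠ 0 := sub_ne_zero.mpr (fun h => by rw [h] at hz; linarith)
  have he : 1 - (starRingEnd ℂ) a * z ≠ 0 := by
    intro h
    have := aux_pole_abs_eq a hz
    rw [h, norm_zero] at this
    exact hd (norm_eq_zero.mp this.symm)
  have hnum : HasDerivAt (fun w => 1 - (starRingEnd ℂ) a * w) (-((starRingEnd ℂ) a)) z := by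
    simpa using ((hasDerivAt_id z).const_mul ((starRingEnd ℂ) a)).const_sub 1
  have hden : HasDerivAt (fun w : ℂ => w - a) 1 z := (hasDerivAt_id z).sub_const a
  rw [logDeriv_div z he hd hnum.differentiableAt hden.differentiableAt]
  have e1 : logDeriv (fun w => 1 - (starRingEnd ℂ) a * w) z
      = (-((starRingEnd ℂ) a))/(1 - (starRingEnd ℂ) a * z) := by
    rw [logDeriv_apply, hnum.deriv]
  have e2 : logDeriv (fun w : ℂ => w - a) z = 1/(z - a) := by
    rw [logDeriv_apply, hden.deriv]
  rw [e1, e2]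
  have haa : (starRingEnd ℂ) a * a = ((Complex.normSq a : ℝ) : ℂ) := by
    rw [mul_comm, Complex.mul_conj]
  have key : (-((starRingEnd ℂ) a))/(1 - (starRingEnd ℂ) a * z) - 1/(z - a)
      = (((Complex.normSq a : ℝ) : ℂ) - 1)/((1 - (starRingEnd ℂ) a * z)*(z - a)) := by
    field_simp
    linear_combination haa
  rw [key, norm_div, norm_mul, aux_pole_abs_eq a hz]
  have hn1 : (1:ℝ) < Complex.normSq a := by
    rw [Complex.normSq_eq_norm_sq]; nlinarith
  have : ‖((Complex.normSq a : ℝ) : ℂ) - 1‖ = Complex.normSq a - 1 := by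
    rw [show (((Complex.normSq a : ℝ) : ℂ) - 1) = (((Complex.normSq a - 1 : ℝ)) : ℂ) by
      push_cast; ring, Complex.norm_real, Real.norm_eq_abs, abs_of_pos (by linarith)]
  rw [this]
  congr 1
  rw [← Complex.sq_norm]; ring

theorem stmt11 (n m : ℕ) (hn : 0 < n) (hm : m ≤ n)
    (k : ℝ) (hk0 : 0 < k) (hk : k ≤ 1)
    (a : Fin n → ℂ) (ha : ∀ j, 1 < ‖a j‖)
    (b : Fin m → ℂ) (hb : ∀ j, ‖b j‖ ≤ k)
    (αm : ℂ) (hαm : αm ≠ 0)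
    (W B P R : ℂ → ℂ)
    (hW : ∀ z, W z = ∏ j, (z - a j))
    (hB : ∀ z, B z = ∏ j, (1 - (starRingEnd ℂ) (a j) * z) / (z - a j))
    (hP : ∀ z, P z = αm * ∏ j, (z - b j))
    (hR : ∀ z, R z = P z / W z)
    (z : ℂ) (hz : ‖z‖ = 1) :
    (1 / 2) * (‖deriv B z‖
          + (2 * (m : ℝ) - (n : ℝ) * (1 + k)) / (1 + k)
          + 2 * ((∑ j, 1 / (1 + ‖b j‖)) - (m : ℝ) / (1 + k)))
        * ‖R z‖
      ≤ ‖deriv R z‖ := by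
  have hzj : ∀ j : Fin n, z - a j ≠ 0 := fun j =>
    sub_ne_zero.mpr (fun h => by rw [h] at hz; linarith [ha j])
  have hej : ∀ j : Fin n, (1 : ℂ) - (starRingEnd ℂ) (a j) * z ≠ 0 := by
    intro j h
    have := aux_pole_abs_eq (a j) hz
    rw [h, norm_zero] at this
    exact hzj j (norm_eq_zero.mp this.symm)
  -- replace the abstract functions by their formulas
  obtain rfl : B = fun w => ∏ j, (1 - (starRingEnd ℂ) (a j) * w) / (w - a j) := funext hB
  obtain rfl : W = fun w => ∏ j, (w - a j) := funext hW
  obtain rfl : P = fun w => αm * ∏ j, (w - b j) := funext hP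
  simp only at hR
  obtain rfl : R = fun w => (αm * ∏ j, (w - b j)) / ∏ j, (w - a j) := funext hR
  simp only
  set u : Fin n → ℝ := fun j => (Complex.normSq (a j) - 1)/Complex.normSq (z - a j) with hu
  have hWz : (∏ j, (z - a j)) ≠ 0 := Finset.prod_ne_zero_iff.mpr (fun j _ => hzj j)
  -- Step B : |B'(z)| ≤ ∑ u j
  have hBz_ne : (∏ j, (1 - (starRingEnd ℂ) (a j) * z)/(z - a j)) ≠ 0 :=
    Finset.prod_ne_zero_iff.mpr (fun j _ => div_ne_zero (hej j) (hzj j))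
  have hBz_abs : ‖∏ j, (1 - (starRingEnd ℂ) (a j) * z)/(z - a j)‖ = 1 := by
    rw [norm_prod]
    exact Finset.prod_eq_one (fun j _ => by
      rw [norm_div, aux_pole_abs_eq (a j) hz, div_self (norm_ne_zero_iff.mpr (hzj j))])
  have hldB : logDeriv (fun w => ∏ j, (1 - (starRingEnd ℂ) (a j) * w)/(w - a j)) z
      = ∑ j, logDeriv (fun w => (1 - (starRingEnd ℂ) (a j) * w)/(w - a j)) z := by
    have h := logDeriv_prod (s := Finset.univ)
      (f := fun j (w : ℂ) => (1 - (starRingEnd ℂ) (a j) * w)/(w - a j)) (x := z)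
      (fun j _ => div_ne_zero (hej j) (hzj j))
      (fun j _ => DifferentiableAt.div (by fun_prop) (by fun_prop) (hzj j))
    simpa using h
  have hBd : ‖deriv (fun w => ∏ j, (1 - (starRingEnd ℂ) (a j) * w)/(w - a j)) z‖
      ≤ ∑ j, u j := by
    have h0 : deriv (fun w => ∏ j, (1 - (starRingEnd ℂ) (a j) * w)/(w - a j)) z
        = logDeriv (fun w => ∏ j, (1 - (starRingEnd ℂ) (a j) * w)/(w - a j)) z
          * (∏ j, (1 - (starRingEnd ℂ) (a j) * z)/(z - a j)) := by
      rw [logDeriv_apply]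
      exact (div_mul_cancel₀ _ hBz_ne).symm
    rw [h0, norm_mul, hBz_abs, mul_one, hldB]
    calc ‖∑ j, logDeriv (fun w => (1 - (starRingEnd ℂ) (a j) * w)/(w - a j)) z‖
        ≤ ∑ j, ‖logDeriv (fun w => (1 - (starRingEnd ℂ) (a j) * w)/(w - a j)) z‖ :=
          norm_sum_le _ _
      _ = ∑ j, u j := Finset.sum_congr rfl (fun j _ => aux_pole_logDeriv hz (ha j))
  have h1k : (0:ℝ) < 1 + k := by linarith
  rcases eq_or_ne ((αm * ∏ j, (z - b j)) / ∏ j, (z - a j)) 0 with hRz | hRz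
  · rw [hRz, norm_zero, mul_zero]
    positivity
  · have hPz : αm * ∏ j, (z - b j) ≠ 0 := fun h => hRz (by rw [h, zero_div])
    have hprodb : ∀ j : Fin m, z - b j ≠ 0 := by
      have h := (mul_ne_zero_iff.mp hPz).2
      rw [Finset.prod_ne_zero_iff] at h
      exact fun j => h j (Finset.mem_univ j)
    have hRabs : 0 < ‖(αm * ∏ j, (z - b j)) / ∏ j, (z - a j)‖ :=
      norm_pos_iff.mpr hRz
    have hPd : DifferentiableAt ℂ (fun w => αm * ∏ j, (w - b j)) z := by fun_prop
    have hWd : DifferentiableAt ℂ (fun w : ℂ => ∏ j, (w - a j)) z := by fun_prop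
    have hLD : logDeriv (fun w => (αm * ∏ j, (w - b j)) / ∏ j, (w - a j)) z
        = (∑ j, 1/(z - b j)) - ∑ j, 1/(z - a j) := by
      rw [logDeriv_div z hPz hWz hPd hWd]
      congr 1
      · rw [logDeriv_const_mul z αm hαm]
        have h := logDeriv_prod (s := Finset.univ) (f := fun j (w : ℂ) => w - b j) (x := z)
          (fun j _ => hprodb j) (fun j _ => by fun_prop)
        rw [h]
        exact Finset.sum_congr rfl (fun j _ => aux_logDeriv_sub_const _ z)
      · have h := logDeriv_prod (s := Finset.univ) (f := fun j (w : ℂ) => w - a j) (x := z)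
          (fun j _ => hzj j) (fun j _ => by fun_prop)
        rw [h]
        exact Finset.sum_congr rfl (fun j _ => aux_logDeriv_sub_const _ z)
    -- real part computation
    have hre : (z * logDeriv (fun w => (αm * ∏ j, (w - b j)) / ∏ j, (w - a j)) z).re
        = (∑ j, (z/(z - b j)).re) - ∑ j, (z/(z - a j)).re := by
      rw [hLD, mul_sub, Finset.mul_sum, Finset.mul_sum]
      simp only [mul_one_div]
      rw [Complex.sub_re, Complex.re_sum, Complex.re_sum]
    have hsum_a : ∑ j, (z/(z - a j)).re = (n:ℝ)/2 - (∑ j, u j)/2 := by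
      rw [Finset.sum_congr rfl (fun j _ => aux_pole_re hz (hzj j))]
      rw [← Finset.sum_div, Finset.sum_sub_distrib, Finset.sum_const, Finset.card_univ,
        Fintype.card_fin]
      push_cast; ring
    have hsum_b : (∑ j, 1/(1 + ‖b j‖)) ≤ ∑ j, (z/(z - b j)).re :=
      Finset.sum_le_sum (fun j _ => aux_zero_re hz (le_trans (hb j) hk) (hprodb j))
    -- final chain
    have hcoef : (1 / 2) * (‖deriv (fun w => ∏ j, (1 - (starRingEnd ℂ) (a j) * w)/(w - a j)) z‖
          + (2 * (m : ℝ) - (n : ℝ) * (1 + k)) / (1 + k)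
          + 2 * ((∑ j, 1 / (1 + ‖b j‖)) - (m : ℝ) / (1 + k)))
        = ‖deriv (fun w => ∏ j, (1 - (starRingEnd ℂ) (a j) * w)/(w - a j)) z‖/2
          + (∑ j, 1/(1 + ‖b j‖)) - (n:ℝ)/2 := by
      field_simp
      ring
    rw [hcoef, ← le_div_iff₀ hRabs]
    have habs : ‖deriv (fun w => (αm * ∏ j, (w - b j)) / ∏ j, (w - a j)) z‖
          / ‖(αm * ∏ j, (z - b j)) / ∏ j, (z - a j)‖
        = ‖z * logDeriv (fun w => (αm * ∏ j, (w - b j)) / ∏ j, (w - a j)) z‖ := by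
      rw [norm_mul, hz, one_mul, logDeriv_apply]
      simp [norm_div]
    rw [habs]
    calc ‖deriv (fun w => ∏ j, (1 - (starRingEnd ℂ) (a j) * w)/(w - a j)) z‖/2
          + (∑ j, 1/(1 + ‖b j‖)) - (n:ℝ)/2
        ≤ (z * logDeriv (fun w => (αm * ∏ j, (w - b j)) / ∏ j, (w - a j)) z).re := by
          rw [hre, hsum_a]
          linarith [hBd, hsum_b]
      _ ≤ ‖z * logDeriv (fun w => (αm * ∏ j, (w - b j)) / ∏ j, (w - a j)) z‖ :=
          Complex.re_le_norm _
end

section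
/- Suppose R ∈ R_n has all its zeros in |z| ≤ 1; that is, R(z) = P(z)/W(z) with P(z) = α_m ∏_{j=1}^m (z − b_j), α_m ≠ 0, m ≤ n, and |b_j| ≤ 1 for j = 1, …, m. Then for every z with |z| = 1, |R′(z)| ≥ (1/2)·[ |B′(z)| − (n − m) + 2·( Σ_{j=1}^m 1/(1+|b_j|) − m/2 ) ]·|R(z)|. -/
open Finset

private lemma prod_hasDerivAt' {n : ℕ} (f : Fin n → ℂ → ℂ) (f' : Fin n → ℂ) (x : ℂ)
    (hf : ∀ i, HasDerivAt (f i) (f' i) x) :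
    HasDerivAt (fun y => ∏ i, f i y) (∑ i, (∏ j ∈ univ.erase i, f j x) * f' i) x := by
  have h := HasDerivAt.fun_finsetProd (u := (univ : Finset (Fin n))) (f := f) (f' := f')
    (fun i _ => hf i)
  simpa [smul_eq_mul] using h

private lemma sum_log_form {n : ℕ} (g g' : Fin n → ℂ) (hne : ∀ i, g i ≠ 0) :
    (∑ i, (∏ j ∈ univ.erase i, g j) * g' i) = (∏ i, g i) * ∑ i, g' i / g i := by
  rw [Finset.mul_sum]
  refine Finset.sum_congr rfl fun i _ => ?_
  rw [← Finset.mul_prod_erase univ g (Finset.mem_univ i)]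
  field_simp [hne i]

private lemma realA {β t D : ℝ} (hβ0 : 0 ≤ β) (hβ1 : β ≤ 1) (ht : |t| ≤ β)
    (hD : 0 < D) (hDe : D = 1 + β^2 - 2*t) : 1/(1+β) ≤ (1-t)/D := by
  rw [div_le_div_iff₀ (by linarith) hD]
  have h1 : -β ≤ t := (abs_le.mp ht).1
  nlinarith

theorem stmt12 (n m : ℕ) (hn : 0 < n) (hm : m ≤ n)
    (a : Fin n → ℂ) (ha : ∀ j, 1 < ‖a j‖)
    (b : Fin m → ℂ) (hb : ∀ j, ‖b j‖ ≤ 1)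
    (αm : ℂ) (hαm : αm ≠ 0)
    (W B P R : ℂ → ℂ)
    (hW : ∀ z, W z = ∏ j, (z - a j))
    (hB : ∀ z, B z = ∏ j, (1 - (starRingEnd ℂ) (a j) * z) / (z - a j))
    (hP : ∀ z, P z = αm * ∏ j, (z - b j))
    (hR : ∀ z, R z = P z / W z)
    (z : ℂ) (hz : ‖z‖ = 1) :
    (1 / 2) * (‖deriv B z‖
          - ((n : ℝ) - (m : ℝ))
          + 2 * ((∑ j, 1 / (1 + ‖b j‖)) - (m : ℝ) / 2))
        * ‖R z‖
      ≤ ‖deriv R z‖ := by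
  by_cases hR0 : R z = 0
  · rw [hR0, norm_zero, mul_zero]
    exact norm_nonneg _
  -- basic non-vanishing facts
  have hzz : z * (starRingEnd ℂ) z = 1 := by
    rw [Complex.mul_conj]
    norm_cast
    rw [Complex.normSq_eq_norm_sq, hz]; norm_num
  have haz : ∀ j, z - a j ≠ 0 := by
    intro j h
    rw [sub_eq_zero] at h
    have h2 := ha j
    rw [← h, hz] at h2
    norm_num at h2
  have hWz : (∏ j, (z - a j)) ≠ 0 := Finset.prod_ne_zero_iff.mpr fun j _ => haz j
  have hPz : αm * ∏ j, (z - b j) ≠ 0 := by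
    intro h
    apply hR0
    rw [hR, hP, hW, h, zero_div]
  have hbz : ∀ j, z - b j ≠ 0 := by
    intro j
    have h2 : (∏ j, (z - b j)) ≠ 0 := fun h => hPz (by rw [h, mul_zero])
    exact Finset.prod_ne_zero_iff.mp h2 j (Finset.mem_univ j)
  have h1az : ∀ j, 1 - (starRingEnd ℂ) (a j) * z ≠ 0 := by
    intro j h
    rw [sub_eq_zero] at h
    have h2 : ‖(1:ℂ)‖ = ‖(starRingEnd ℂ) (a j) * z‖ := by rw [h]
    rw [norm_one, norm_mul, Complex.norm_conj, hz, mul_one] at h2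
    have := ha j; linarith
  -- key identity
  have hkey : ∀ w : ℂ, (z - w) * (1 - (starRingEnd ℂ) w * z)
      = z * ((Complex.normSq (z - w) : ℝ) : ℂ) := by
    intro w
    rw [← Complex.mul_conj (z - w), map_sub]
    linear_combination -(z - w) * hzz
  have hnsne : ∀ w : ℂ, z - w ≠ 0 → ((Complex.normSq (z - w) : ℝ) : ℂ) ≠ 0 := by
    intro w hw
    norm_cast
    exact Complex.normSq_pos.mpr hw |>.ne'
  -- real part formula
  have hre : ∀ w : ℂ, z - w ≠ 0 →
      (z * (z - w)⁻¹).re = (1 - ((starRingEnd ℂ) w * z).re) / Complex.normSq (z - w) := by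
    intro w hw
    have h2 : z * (z - w)⁻¹ = (1 - (starRingEnd ℂ) w * z) / ((Complex.normSq (z - w) : ℝ) : ℂ) := by
      rw [eq_div_iff (hnsne w hw)]
      apply mul_left_cancel₀ hw
      rw [hkey w]
      field_simp
    rw [h2, Complex.div_ofReal_re, Complex.sub_re, Complex.one_re]
  -- derivative of R
  set Sb : ℂ := ∑ j, (1:ℂ) / (z - b j) with hSb
  set Sa : ℂ := ∑ j, (1:ℂ) / (z - a j) with hSa
  have hPd : HasDerivAt (fun y => αm * ∏ j, (y - b j)) ((αm * ∏ j, (z - b j)) * Sb) z := by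
    have h1 : HasDerivAt (fun y => ∏ j, (y - b j)) ((∏ j, (z - b j)) * Sb) z := by
      have h2 := prod_hasDerivAt' (fun j y => y - b j) (fun _ => 1) z
        (fun j => (hasDerivAt_id z).sub_const (b j))
      rwa [sum_log_form _ _ hbz] at h2
    have h3 := h1.const_mul αm
    exact h3.congr_deriv (by ring)
  have hWd : HasDerivAt (fun y => ∏ j, (y - a j)) ((∏ j, (z - a j)) * Sa) z := by
    have h2 := prod_hasDerivAt' (fun j y => y - a j) (fun _ => 1) z
      (fun j => (hasDerivAt_id z).sub_const (a j))
    rwa [sum_log_form _ _ haz] at h2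
  have hRd : deriv R z = R z * (Sb - Sa) := by
    have h1 := hPd.fun_div hWd hWz
    have h2 : deriv R z = deriv (fun y => (αm * ∏ j, (y - b j)) / ∏ j, (y - a j)) z := by
      apply Filter.EventuallyEq.deriv_eq
      exact Filter.Eventually.of_forall (fun y => by rw [hR, hP, hW])
    rw [h2, h1.deriv, hR, hP, hW]
    field_simp
  -- deriv of B
  have hz0 : z ≠ 0 := by
    intro h; rw [h, norm_zero] at hz; norm_num at hz
  have hgd : ∀ j : Fin n, HasDerivAt (fun y => (1 - (starRingEnd ℂ) (a j) * y) / (y - a j))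
      (((starRingEnd ℂ) (a j) * a j - 1) / (z - a j)^2) z := by
    intro j
    have hnum : HasDerivAt (fun y => 1 - (starRingEnd ℂ) (a j) * y) (-((starRingEnd ℂ) (a j))) z := by
      simpa using (((hasDerivAt_id z).const_mul ((starRingEnd ℂ) (a j))).const_sub 1)
    have hden : HasDerivAt (fun y => y - a j) 1 z := (hasDerivAt_id z).sub_const (a j)
    have h := hnum.fun_div hden (haz j)
    exact h.congr_deriv (by ring)
  set T : ℂ := ∑ j, (((starRingEnd ℂ) (a j) * a j - 1) / (z - a j)^2)
      / ((1 - (starRingEnd ℂ) (a j) * z) / (z - a j)) with hT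
  set K : ℝ := ∑ j, (Complex.normSq (a j) - 1) / Complex.normSq (z - a j) with hK
  have hgne : ∀ j, (1 - (starRingEnd ℂ) (a j) * z) / (z - a j) ≠ 0 :=
    fun j => div_ne_zero (h1az j) (haz j)
  have hBd : deriv B z = (∏ j, (1 - (starRingEnd ℂ) (a j) * z) / (z - a j)) * T := by
    have h2 := prod_hasDerivAt' (fun j y => (1 - (starRingEnd ℂ) (a j) * y) / (y - a j)) _ z hgd
    rw [sum_log_form _ _ hgne] at h2
    have h3 : deriv B z = deriv (fun y => ∏ j, (1 - (starRingEnd ℂ) (a j) * y) / (y - a j)) z :=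
      Filter.EventuallyEq.deriv_eq (Filter.Eventually.of_forall (fun y => by rw [hB]))
    rw [h3, h2.deriv, hT]
  have hzT : z * T = (K : ℂ) := by
    rw [hT, hK, Finset.mul_sum]
    push_cast
    refine Finset.sum_congr rfl fun j _ => ?_
    have hc : (starRingEnd ℂ) (a j) * a j = (Complex.normSq (a j) : ℂ) := by
      rw [mul_comm, Complex.mul_conj]
    have h1 := hkey (a j)
    have hns := hnsne (a j) (haz j)
    have e1 : ((starRingEnd ℂ) (a j) * a j - 1) / (z - a j)^2
          / ((1 - (starRingEnd ℂ) (a j) * z) / (z - a j))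
        = ((starRingEnd ℂ) (a j) * a j - 1) / ((z - a j) * (1 - (starRingEnd ℂ) (a j) * z)) := by
      field_simp [haz j, h1az j]
    rw [e1, h1, mul_div_assoc', mul_div_mul_left _ _ hz0, hc]
  have hBabs : ‖∏ j, (1 - (starRingEnd ℂ) (a j) * z) / (z - a j)‖ = 1 := by
    rw [norm_prod]
    apply Finset.prod_eq_one
    intro j _
    rw [norm_div]
    have h1 : 1 - (starRingEnd ℂ) (a j) * z = z * (starRingEnd ℂ) (z - a j) := by
      rw [map_sub]
      linear_combination -hzz
    rw [h1, norm_mul, hz, Complex.norm_conj, one_mul, div_self]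
    exact norm_ne_zero_iff.mpr (haz j)
  have hKterm : ∀ j, 0 ≤ (Complex.normSq (a j) - 1) / Complex.normSq (z - a j) := by
    intro j
    apply div_nonneg _ (Complex.normSq_nonneg _)
    have h1 : Complex.normSq (a j) = ‖a j‖^2 := Complex.normSq_eq_norm_sq _
    nlinarith [ha j]
  have hK0 : 0 ≤ K := Finset.sum_nonneg fun j _ => hKterm j
  have habsB : ‖deriv B z‖ = K := by
    rw [hBd, norm_mul, hBabs, one_mul]
    have h1 : ‖T‖ = ‖z * T‖ := by rw [norm_mul, hz, one_mul]
    rw [h1, hzT, Complex.norm_real, Real.norm_of_nonneg hK0]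
  -- real part estimates
  have hnsz : Complex.normSq z = 1 := by
    rw [Complex.normSq_eq_norm_sq, hz]; norm_num
  have hreb : ∀ j, 1 / (1 + ‖b j‖) ≤ (z * (z - b j)⁻¹).re := by
    intro j
    rw [hre (b j) (hbz j)]
    apply realA (norm_nonneg (b j)) (hb j) ?_ (Complex.normSq_pos.mpr (hbz j)) ?_
    · calc |((starRingEnd ℂ) (b j) * z).re| ≤ ‖(starRingEnd ℂ) (b j) * z‖ :=
          Complex.abs_re_le_norm _
        _ = ‖b j‖ := by rw [norm_mul, Complex.norm_conj, hz, mul_one]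
    · rw [Complex.normSq_sub, hnsz, Complex.normSq_eq_norm_sq (b j), mul_comm z ((starRingEnd ℂ) (b j))]
  have hrea : ∀ j, (z * (z - a j)⁻¹).re
      = 1/2 - (Complex.normSq (a j) - 1) / (2 * Complex.normSq (z - a j)) := by
    intro j
    rw [hre (a j) (haz j)]
    have hDpos : 0 < Complex.normSq (z - a j) := Complex.normSq_pos.mpr (haz j)
    have hD : Complex.normSq (z - a j)
        = 1 + Complex.normSq (a j) - 2 * (((starRingEnd ℂ) (a j)) * z).re := by
      rw [Complex.normSq_sub, hnsz, mul_comm z ((starRingEnd ℂ) (a j))]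
    have hne2 : (1 + Complex.normSq (a j) - 2 * (((starRingEnd ℂ) (a j)) * z).re) ≠ 0 := by
      rw [← hD]; exact hDpos.ne'
    rw [hD]
    generalize ((starRingEnd ℂ) (a j) * z).re = t at hne2 ⊢
    generalize Complex.normSq (a j) = A at hne2 ⊢
    rw [eq_sub_iff_add_eq, div_add_div _ _ hne2 (mul_ne_zero two_ne_zero hne2), div_eq_iff (mul_ne_zero hne2 (mul_ne_zero two_ne_zero hne2))]; ring
  have hzSb : (∑ j, 1 / (1 + ‖b j‖)) ≤ (z * Sb).re := by
    rw [hSb, Finset.mul_sum, Complex.re_sum]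
    apply Finset.sum_le_sum
    intro j _
    rw [one_div (z - b j)]
    exact hreb j
  have hzSa : (z * Sa).re = (n : ℝ)/2 - K/2 := by
    have e : (z * Sa).re
        = ∑ j, (1/2 - (Complex.normSq (a j) - 1) / (2 * Complex.normSq (z - a j))) := by
      rw [hSa, Finset.mul_sum, Complex.re_sum]
      refine Finset.sum_congr rfl fun j _ => ?_
      rw [one_div (z - a j)]
      exact hrea j
    rw [e, Finset.sum_sub_distrib, Finset.sum_const, card_univ, Fintype.card_fin, nsmul_eq_mul]
    rw [hK, Finset.sum_div]
    congr 1
    · ring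
    · refine Finset.sum_congr rfl fun j _ => ?_
      ring
  have hre_le : (z * (Sb - Sa)).re ≤ ‖Sb - Sa‖ := by
    calc (z * (Sb - Sa)).re ≤ ‖z * (Sb - Sa)‖ := Complex.re_le_norm _
      _ = ‖Sb - Sa‖ := by rw [norm_mul, hz, one_mul]
  have hre_split : (z * (Sb - Sa)).re = (z * Sb).re - (z * Sa).re := by
    rw [mul_sub, Complex.sub_re]
  have hcoeff : (1/2) * (K - ((n:ℝ) - (m:ℝ))
      + 2 * ((∑ j, 1 / (1 + ‖b j‖)) - (m:ℝ)/2)) ≤ ‖Sb - Sa‖ := by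
    linarith
  rw [habsB, hRd, norm_mul]
  calc (1/2) * (K - ((n:ℝ) - (m:ℝ))
      + 2 * ((∑ j, 1 / (1 + ‖b j‖)) - (m:ℝ)/2)) * ‖R z‖
      ≤ ‖Sb - Sa‖ * ‖R z‖ :=
        mul_le_mul_of_nonneg_right hcoeff (norm_nonneg _)
    _ = ‖R z‖ * ‖Sb - Sa‖ := mul_comm _ _
end

section
/- Let 0 < k ≤ 1 and suppose R ∈ R_n has all its zeros in |z| ≤ k; that is, R(z) = P(z)/W(z) with P(z) = α_m ∏_{j=1}^m (z − b_j) = α_0 + α_1 z + ⋯ + α_m z^m, α_m ≠ 0, m ≤ n, and |b_j| ≤ k ≤ 1 for j = 1, …, m. Then for every z with |z| = 1, |R′(z)| ≥ (1/2)·[ |B′(z)| + (2m − n(1+k))/(k+1) + (2k/(k+1))·( k^m|α_m| − |α_0| )/( k^m|α_m| + |α_0| ) ]·|R(z)|. -/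
open Finset

private lemma aux_two (a b : ℝ) (ha0 : 0 ≤ a) (ha1 : a ≤ 1) (hb0 : 0 ≤ b) (hb1 : b ≤ 1) :
    (1 - a*b)/(1 + a*b) ≤ (1-a)/(1+a) + (1-b)/(1+b) := by
  have h1 : (0:ℝ) < 1 + a := by linarith
  have h2 : (0:ℝ) < 1 + b := by linarith
  have h3 : (0:ℝ) < 1 + a*b := by nlinarith
  rw [div_add_div _ _ h1.ne' h2.ne', div_le_div_iff₀ h3 (by positivity)]
  nlinarith [mul_nonneg (sub_nonneg.mpr ha1) (sub_nonneg.mpr hb1),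
    mul_nonneg ha0 hb0, sq_nonneg (a*b), sq_nonneg (a-b),
    mul_nonneg (mul_nonneg ha0 hb0) (mul_nonneg ha0 hb0),
    mul_le_one₀ ha1 hb0 hb1]

private lemma aux_prod {ι : Type*} [DecidableEq ι] (t : Finset ι) (f : ι → ℝ) :
    (∀ i ∈ t, 0 ≤ f i) → (∀ i ∈ t, f i ≤ 1) →
    (1 - ∏ i ∈ t, f i)/(1 + ∏ i ∈ t, f i) ≤ ∑ i ∈ t, (1 - f i)/(1 + f i) := by
  induction t using Finset.induction_on with
  | empty => intro _ _; simp
  | @insert a s ha ih =>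
    intro h0 h1
    rw [Finset.prod_insert ha, Finset.sum_insert ha]
    have hp0 : 0 ≤ ∏ i ∈ s, f i :=
      Finset.prod_nonneg fun i hi => h0 i (Finset.mem_insert_of_mem hi)
    have hp1 : ∏ i ∈ s, f i ≤ 1 :=
      Finset.prod_le_one (fun i hi => h0 i (Finset.mem_insert_of_mem hi))
        (fun i hi => h1 i (Finset.mem_insert_of_mem hi))
    calc (1 - f a * ∏ i ∈ s, f i)/(1 + f a * ∏ i ∈ s, f i)
        ≤ (1 - f a)/(1 + f a) + (1 - ∏ i ∈ s, f i)/(1 + ∏ i ∈ s, f i) :=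
          aux_two _ _ (h0 a (Finset.mem_insert_self a s)) (h1 a (Finset.mem_insert_self a s)) hp0 hp1
      _ ≤ (1 - f a)/(1 + f a) + ∑ i ∈ s, (1 - f i)/(1 + f i) := by
          have := ih (fun i hi => h0 i (Finset.mem_insert_of_mem hi))
            (fun i hi => h1 i (Finset.mem_insert_of_mem hi))
          linarith

private lemma aux_step (k s : ℝ) (hk0 : 0 < k) (hk1 : k ≤ 1) (hs0 : 0 ≤ s) (hs1 : s ≤ 1) :
    1/(1+k) + k/(k+1) * ((1-s)/(1+s)) ≤ 1/(1+k*s) := by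
  have h1 : (0:ℝ) < 1 + k := by linarith
  have h2 : (0:ℝ) < 1 + s := by linarith
  have h3 : (0:ℝ) < 1 + k*s := by nlinarith
  rw [div_mul_div_comm, div_add_div _ _ h1.ne' (by positivity), div_le_div_iff₀ (by positivity) h3]
  nlinarith [mul_nonneg (mul_nonneg (mul_nonneg hk0.le hs0) (sub_nonneg.mpr hk1)) (sub_nonneg.mpr hs1)]

private lemma aux_re_div (z w : ℂ) (hz : ‖z‖ = 1) (hzw : z - w ≠ 0) :
    (z / (z - w)).re = (1 - (z * (starRingEnd ℂ) w).re) / Complex.normSq (z - w) := by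
  have h1 : Complex.normSq z = 1 := by rw [← Complex.sq_norm, hz]; norm_num
  have hc : (starRingEnd ℂ) (z - w) ≠ 0 :=
    fun h => hzw (by simpa using congrArg (starRingEnd ℂ) h)
  have h2 : z * (starRingEnd ℂ) (z - w) = 1 - z * (starRingEnd ℂ) w := by
    rw [map_sub, mul_sub, Complex.mul_conj, h1]
    norm_num
  have key : z / (z - w) = (1 - z * (starRingEnd ℂ) w) / ((Complex.normSq (z - w) : ℝ) : ℂ) := by
    rw [← h2, ← Complex.mul_conj (z - w), mul_div_mul_right _ _ hc]
  rw [key, Complex.div_ofReal_re]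
  simp

private lemma aux_re_b (z w : ℂ) (hz : ‖z‖ = 1) (hw : ‖w‖ ≤ 1)
    (hzw : z - w ≠ 0) :
    1 / (1 + ‖w‖) ≤ (z / (z - w)).re := by
  rw [aux_re_div z w hz hzw]
  set t := ‖w‖ with ht
  have ht0 : 0 ≤ t := norm_nonneg w
  set r := (z * (starRingEnd ℂ) w).re with hr
  have hrle : |r| ≤ t := by
    calc |r| ≤ ‖z * (starRingEnd ℂ) w‖ := Complex.abs_re_le_norm _
    _ = t := by rw [norm_mul, Complex.norm_conj, hz, one_mul]
  have hD : Complex.normSq (z - w) = 1 + t^2 - 2*r := by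
    rw [Complex.normSq_sub, ← Complex.sq_norm, ← Complex.sq_norm w, hz]; ring
  have hDpos : 0 < Complex.normSq (z - w) := Complex.normSq_pos.mpr hzw
  have hDpos' : (0:ℝ) < 1 + t^2 - 2*r := hD ▸ hDpos
  have h1 := abs_le.mp hrle
  rw [hD, div_le_div_iff₀ (by linarith) hDpos']
  nlinarith [mul_nonneg (sub_nonneg.mpr hw) (by linarith [h1.1] : (0:ℝ) ≤ t + r)]

private lemma aux_re_a (z w : ℂ) (hz : ‖z‖ = 1) (hw : 1 < ‖w‖) :
    (z / (z - w)).re = 1/2 - (Complex.normSq w - 1)/(2 * Complex.normSq (z - w)) := by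
  have hzw : z - w ≠ 0 := by
    intro h
    rw [sub_eq_zero] at h
    rw [← h, hz] at hw
    exact lt_irrefl 1 hw
  rw [aux_re_div z w hz hzw]
  have hD : Complex.normSq (z - w) = 1 + Complex.normSq w - 2*(z * (starRingEnd ℂ) w).re := by
    rw [Complex.normSq_sub, ← Complex.sq_norm z, hz]; ring
  have hDpos : 0 < Complex.normSq (z - w) := Complex.normSq_pos.mpr hzw
  have hnum : (1 - (z * (starRingEnd ℂ) w).re)
      = Complex.normSq (z - w)/2 - (Complex.normSq w - 1)/2 := by rw [hD]; ring
  rw [hnum]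
  field_simp

theorem stmt13 (n m : ℕ) (hn : 0 < n) (hm : m ≤ n)
    (k : ℝ) (hk0 : 0 < k) (hk : k ≤ 1)
    (a : Fin n → ℂ) (ha : ∀ j, 1 < ‖a j‖)
    (b : Fin m → ℂ) (hb : ∀ j, ‖b j‖ ≤ k)
    (α : ℕ → ℂ) (hαm : α m ≠ 0)
    (W B P R : ℂ → ℂ)
    (hW : ∀ z, W z = ∏ j, (z - a j))
    (hB : ∀ z, B z = ∏ j, (1 - (starRingEnd ℂ) (a j) * z) / (z - a j))
    (hP : ∀ z, P z = α m * ∏ j, (z - b j))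
    (hPsum : ∀ z, P z = ∑ i ∈ Finset.range (m + 1), α i * z ^ i)
    (hR : ∀ z, R z = P z / W z)
    (z : ℂ) (hz : ‖z‖ = 1) :
    (1 / 2) * (‖deriv B z‖
          + (2 * (m : ℝ) - (n : ℝ) * (1 + k)) / (k + 1)
          + (2 * k / (k + 1))
              * ((k ^ m * ‖α m‖ - ‖α 0‖)
                  / (k ^ m * ‖α m‖ + ‖α 0‖)))
        * ‖R z‖
      ≤ ‖deriv R z‖ := by
  classical
  have hza : ∀ j : Fin n, z - a j ≠ 0 := by
    intro j h
    rw [sub_eq_zero] at h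
    have := ha j
    rw [← h, hz] at this
    exact lt_irrefl 1 this
  have hWz : W z ≠ 0 := by
    rw [hW]; exact Finset.prod_ne_zero_iff.mpr fun j _ => hza j
  by_cases hPz : P z = 0
  · have hR0 : ‖R z‖ = 0 := by rw [hR, hPz, zero_div, norm_zero]
    rw [hR0, mul_zero]
    exact norm_nonneg _
  -- main case
  have hzb : ∀ j : Fin m, z - b j ≠ 0 := by
    intro j
    rw [hP] at hPz
    exact Finset.prod_ne_zero_iff.mp (right_ne_zero_of_mul hPz) j (Finset.mem_univ j)
  set Sa : ℂ := ∑ j, z / (z - a j) with hSa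
  set Sb : ℂ := ∑ j, z / (z - b j) with hSb
  set Wd : ℂ := ∑ i, ∏ j ∈ Finset.univ.erase i, (z - a j) with hWdd
  set Pd : ℂ := ∑ i, ∏ j ∈ Finset.univ.erase i, (z - b j) with hPdd
  -- derivative of W
  have hWderiv : HasDerivAt W Wd z := by
    have h := HasDerivAt.fun_finset_prod (u := Finset.univ)
      (f := fun (j : Fin n) (x : ℂ) => x - a j) (f' := fun _ => 1)
      (fun i _ => (hasDerivAt_id z).sub_const (a i))
    rw [funext hW]
    simpa using h
  have hPderiv : HasDerivAt P (α m * Pd) z := by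
    have h := HasDerivAt.fun_finset_prod (u := Finset.univ)
      (f := fun (j : Fin m) (x : ℂ) => x - b j) (f' := fun _ => 1)
      (fun i _ => (hasDerivAt_id z).sub_const (b i))
    have h2 := h.const_mul (α m)
    rw [funext hP]
    simpa using h2
  have hzW : z * Wd = Sa * W z := by
    rw [hW z, hWdd, hSa, Finset.mul_sum, Finset.sum_mul]
    refine Finset.sum_congr rfl fun i _ => ?_
    rw [← Finset.mul_prod_erase Finset.univ (fun j => z - a j) (Finset.mem_univ i),
      ← mul_assoc, div_mul_cancel₀ _ (hza i)]
  have hzP : z * (α m * Pd) = Sb * P z := by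
    rw [hP z, hPdd, hSb, Finset.sum_mul]
    rw [mul_left_comm, Finset.mul_sum, Finset.mul_sum]
    refine Finset.sum_congr rfl fun i _ => ?_
    rw [← Finset.mul_prod_erase Finset.univ (fun j => z - b j) (Finset.mem_univ i)]
    rw [show z / (z - b i) * (α m * ((z - b i) * ∏ j ∈ Finset.univ.erase i, (z - b j)))
        = α m * (z / (z - b i) * (z - b i) * ∏ j ∈ Finset.univ.erase i, (z - b j)) by ring,
      div_mul_cancel₀ _ (hzb i)]
  have hRderiv : HasDerivAt R ((α m * Pd * W z - P z * Wd) / W z ^ 2) z := by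
    rw [funext hR]
    exact hPderiv.div hWderiv hWz
  have key : z * deriv R z = (Sb - Sa) * R z := by
    rw [hRderiv.deriv, hR z]
    calc z * ((α m * Pd * W z - P z * Wd) / W z ^ 2)
        = (z * (α m * Pd) * W z - P z * (z * Wd)) / W z ^ 2 := by ring
      _ = (Sb * P z * W z - P z * (Sa * W z)) / W z ^ 2 := by rw [hzP, hzW]
      _ = (Sb - Sa) * (P z / W z) := by field_simp
  -- B part
  set c : Fin n → ℝ := fun j => (Complex.normSq (a j) - 1) / Complex.normSq (z - a j) with hc
  have hnormSq_a : ∀ j, 1 < Complex.normSq (a j) := by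
    intro j
    rw [← Complex.sq_norm]
    nlinarith [ha j]
  have hc0 : ∀ j, 0 ≤ c j := fun j =>
    div_nonneg (by linarith [hnormSq_a j]) (Complex.normSq_nonneg _)
  have hfact : ∀ j : Fin n, 1 - (starRingEnd ℂ) (a j) * z = z * (starRingEnd ℂ) (z - a j) := by
    intro j
    have h1 : Complex.normSq z = 1 := by rw [← Complex.sq_norm, hz]; norm_num
    rw [map_sub, mul_sub, Complex.mul_conj, h1]
    push_cast
    ring
  have hfderiv : ∀ j : Fin n, HasDerivAt
      (fun x => (1 - (starRingEnd ℂ) (a j) * x) / (x - a j))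
      (((starRingEnd ℂ) (a j) * a j - 1) / (z - a j) ^ 2) z := by
    intro j
    have h1 : HasDerivAt (fun x : ℂ => 1 - (starRingEnd ℂ) (a j) * x)
        (-((starRingEnd ℂ) (a j))) z := by
      simpa using (((hasDerivAt_id z).const_mul ((starRingEnd ℂ) (a j))).const_sub 1)
    have h2 : HasDerivAt (fun x : ℂ => x - a j) 1 z := (hasDerivAt_id z).sub_const (a j)
    have h3 := h1.fun_div h2 (hza j)
    exact h3.congr_deriv (by ring)
  have hBderiv : HasDerivAt B
      (∑ i, (∏ j ∈ Finset.univ.erase i, (1 - (starRingEnd ℂ) (a j) * z) / (z - a j)) •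
        (((starRingEnd ℂ) (a i) * a i - 1) / (z - a i) ^ 2)) z := by
    have h := HasDerivAt.fun_finset_prod (u := Finset.univ)
      (f := fun (j : Fin n) (x : ℂ) => (1 - (starRingEnd ℂ) (a j) * x) / (x - a j))
      (f' := fun j => ((starRingEnd ℂ) (a j) * a j - 1) / (z - a j) ^ 2)
      (fun i _ => hfderiv i)
    rw [funext hB]
    exact h
  have hzd : ∀ i : Fin n, z * (((starRingEnd ℂ) (a i) * a i - 1) / (z - a i) ^ 2)
      = ((c i : ℝ) : ℂ) * ((1 - (starRingEnd ℂ) (a i) * z) / (z - a i)) := by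
    intro i
    have hconj : (starRingEnd ℂ) (z - a i) ≠ 0 :=
      fun h => hza i (by simpa using congrArg (starRingEnd ℂ) h)
    rw [hc]
    rw [Complex.ofReal_div, Complex.ofReal_sub, Complex.ofReal_one,
      ← Complex.mul_conj (a i), ← Complex.mul_conj (z - a i), hfact i,
      ← mul_div_assoc, div_mul_div_comm,
      div_eq_div_iff (pow_ne_zero 2 (hza i))
        (mul_ne_zero (mul_ne_zero (hza i) hconj) (hza i))]
    ring
  have hzB : z * deriv B z = ((∑ j, c j : ℝ) : ℂ) * B z := by
    rw [hBderiv.deriv, hB z, Complex.ofReal_sum, Finset.mul_sum, Finset.sum_mul]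
    refine Finset.sum_congr rfl fun i _ => ?_
    rw [smul_eq_mul, ← Finset.mul_prod_erase Finset.univ
      (fun j => (1 - (starRingEnd ℂ) (a j) * z) / (z - a j)) (Finset.mem_univ i)]
    calc z * ((∏ j ∈ Finset.univ.erase i, (1 - (starRingEnd ℂ) (a j) * z) / (z - a j)) *
          (((starRingEnd ℂ) (a i) * a i - 1) / (z - a i) ^ 2))
        = (z * (((starRingEnd ℂ) (a i) * a i - 1) / (z - a i) ^ 2)) *
          ∏ j ∈ Finset.univ.erase i, (1 - (starRingEnd ℂ) (a j) * z) / (z - a j) := by ring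
      _ = (((c i : ℝ) : ℂ) * ((1 - (starRingEnd ℂ) (a i) * z) / (z - a i))) *
          ∏ j ∈ Finset.univ.erase i, (1 - (starRingEnd ℂ) (a j) * z) / (z - a j) := by rw [hzd i]
      _ = ((c i : ℝ) : ℂ) * ((1 - (starRingEnd ℂ) (a i) * z) / (z - a i) *
          ∏ j ∈ Finset.univ.erase i, (1 - (starRingEnd ℂ) (a j) * z) / (z - a j)) := by ring
  have hBabs : ‖B z‖ = 1 := by
    rw [hB z, norm_prod]
    refine Finset.prod_eq_one fun j _ => ?_
    rw [norm_div, hfact j, norm_mul, hz, one_mul, Complex.norm_conj,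
      div_self (norm_ne_zero_iff.mpr (hza j))]
  have hBabs' : ‖deriv B z‖ = ∑ j, c j := by
    have h1 : ‖z * deriv B z‖ = ‖deriv B z‖ := by
      rw [norm_mul, hz, one_mul]
    rw [← h1, hzB, norm_mul, hBabs, mul_one, Complex.norm_real, Real.norm_eq_abs,
      abs_of_nonneg (Finset.sum_nonneg fun j _ => hc0 j)]
  -- real parts
  have hSa_re : Sa.re = (n : ℝ)/2 - (∑ j, c j)/2 := by
    rw [hSa, Complex.re_sum]
    rw [Finset.sum_congr rfl (fun j _ => aux_re_a z (a j) hz (ha j))]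
    have he : ∀ j : Fin n, (1:ℝ)/2 - (Complex.normSq (a j) - 1)/(2 * Complex.normSq (z - a j))
        = 1/2 - c j / 2 := by
      intro j; rw [hc]; ring
    rw [Finset.sum_congr rfl (fun j _ => he j)]
    simp only [Finset.sum_sub_distrib, Finset.sum_const, Finset.card_univ, Fintype.card_fin,
      nsmul_eq_mul, ← Finset.sum_div]
    ring
  have hSb_re : ∑ j, 1/(1 + ‖b j‖) ≤ Sb.re := by
    rw [hSb, Complex.re_sum]
    exact Finset.sum_le_sum fun j _ =>
      aux_re_b z (b j) hz (le_trans (hb j) hk) (hzb j)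
  -- constant term facts
  have hα0 : ‖α 0‖ = ‖α m‖ * ∏ j, ‖b j‖ := by
    have h1 : P 0 = α 0 := by
      rw [hPsum 0, Finset.sum_eq_single_of_mem 0 (Finset.mem_range.mpr (Nat.succ_pos m))
        (fun i _ hi => by rw [zero_pow hi, mul_zero])]
      simp
    have h2 : P 0 = α m * ∏ j, (0 - b j) := hP 0
    rw [← h1, h2, norm_mul, norm_prod]
    congr 1
    refine Finset.prod_congr rfl fun j _ => ?_
    rw [zero_sub, norm_neg]
  set q : ℝ := ∏ j, (‖b j‖ / k) with hq
  have hs0 : ∀ j : Fin m, 0 ≤ ‖b j‖ / k :=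
    fun j => div_nonneg (norm_nonneg _) hk0.le
  have hs1 : ∀ j : Fin m, ‖b j‖ / k ≤ 1 :=
    fun j => (div_le_one hk0).mpr (hb j)
  have hq0 : 0 ≤ q := Finset.prod_nonneg fun j _ => hs0 j
  have hq1 : q ≤ 1 := Finset.prod_le_one (fun j _ => hs0 j) (fun j _ => hs1 j)
  have hprod_t : ∏ j, ‖b j‖ = k ^ m * q := by
    have he : ∀ j : Fin m, ‖b j‖ = k * (‖b j‖/k) :=
      fun j => by field_simp
    rw [Finset.prod_congr rfl (fun j _ => he j), Finset.prod_mul_distrib,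
      Finset.prod_const, Finset.card_univ, Fintype.card_fin]
  have hαmpos : 0 < ‖α m‖ := norm_pos_iff.mpr hαm
  have hE : (k ^ m * ‖α m‖ - ‖α 0‖)
      / (k ^ m * ‖α m‖ + ‖α 0‖) = (1 - q)/(1 + q) := by
    rw [hα0, hprod_t]
    have hkm : (0:ℝ) < k ^ m * ‖α m‖ := by positivity
    rw [show k ^ m * ‖α m‖ - ‖α m‖ * (k ^ m * q)
        = (k ^ m * ‖α m‖) * (1 - q) by ring,
      show k ^ m * ‖α m‖ + ‖α m‖ * (k ^ m * q)
        = (k ^ m * ‖α m‖) * (1 + q) by ring,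
      mul_div_mul_left _ _ hkm.ne']
  have hA : (m : ℝ)/(k+1) + k/(k+1) * ((1-q)/(1+q)) ≤ ∑ j, 1/(1 + ‖b j‖) := by
    have h1 : (1-q)/(1+q) ≤ ∑ j, (1 - ‖b j‖/k)/(1 + ‖b j‖/k) :=
      aux_prod Finset.univ _ (fun j _ => hs0 j) (fun j _ => hs1 j)
    calc (m : ℝ)/(k+1) + k/(k+1) * ((1-q)/(1+q))
        ≤ (m : ℝ)/(k+1) + k/(k+1) * ∑ j, (1 - ‖b j‖/k)/(1 + ‖b j‖/k) := by
          have hkk : (0:ℝ) ≤ k/(k+1) := by positivity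
          nlinarith [mul_le_mul_of_nonneg_left h1 hkk]
      _ = ∑ j : Fin m, (1/(1+k) + k/(k+1) * ((1 - ‖b j‖/k)/(1 + ‖b j‖/k))) := by
          rw [Finset.sum_add_distrib, Finset.sum_const, Finset.card_univ,
            Fintype.card_fin, nsmul_eq_mul, ← Finset.mul_sum, mul_one_div, add_comm 1 k]
      _ ≤ ∑ j : Fin m, 1/(1 + k * (‖b j‖/k)) :=
          Finset.sum_le_sum fun j _ => aux_step k _ hk0 hk (hs0 j) (hs1 j)
      _ = ∑ j, 1/(1 + ‖b j‖) := by
          refine Finset.sum_congr rfl fun j _ => ?_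
          rw [mul_comm, div_mul_cancel₀ _ hk0.ne']
  -- final assembly
  have hcoef : (1 / 2) * (‖deriv B z‖
          + (2 * (m : ℝ) - (n : ℝ) * (1 + k)) / (k + 1)
          + (2 * k / (k + 1)) * ((1 - q)/(1 + q))) ≤ (Sb - Sa).re := by
    rw [Complex.sub_re, hSa_re, hBabs']
    have hA' := le_trans hA hSb_re
    have hsplit : (2 * (m:ℝ) - (n:ℝ) * (1 + k)) / (k + 1) = 2 * ((m:ℝ)/(k+1)) - n := by
      field_simp
      ring
    rw [hsplit]
    have h2 : 1 / 2 * ((∑ j, c j) + (2 * ((m:ℝ) / (k + 1)) - (n:ℝ)) + 2 * k / (k + 1) * ((1 - q)/(1 + q)))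
        = (∑ j, c j) / 2 - (n:ℝ) / 2 + ((m:ℝ) / (k + 1) + k / (k + 1) * ((1 - q)/(1 + q))) := by
      ring
    linarith [hA', h2]
  rw [hE]
  calc (1 / 2) * (‖deriv B z‖
          + (2 * (m : ℝ) - (n : ℝ) * (1 + k)) / (k + 1)
          + (2 * k / (k + 1)) * ((1 - q)/(1 + q))) * ‖R z‖
      ≤ (Sb - Sa).re * ‖R z‖ :=
        mul_le_mul_of_nonneg_right hcoef (norm_nonneg _)
    _ ≤ ‖Sb - Sa‖ * ‖R z‖ :=
        mul_le_mul_of_nonneg_right (Complex.re_le_norm _) (norm_nonneg _)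
    _ = ‖deriv R z‖ := by
        rw [← norm_mul, ← key, norm_mul, hz, one_mul]
end

section
/- Suppose R ∈ R_n has all its zeros in |z| ≤ 1; that is, R(z) = P(z)/W(z) with P(z) = α_m ∏_{j=1}^m (z − b_j) = α_0 + α_1 z + ⋯ + α_m z^m, α_m ≠ 0, m ≤ n, and |b_j| ≤ 1 for j = 1, …, m. Then for every z with |z| = 1, |R′(z)| ≥ (1/2)·[ |B′(z)| − (n − m) + (|α_m| − |α_0|)/(|α_m| + |α_0|) ]·|R(z)|. -/
open Finset

lemma lem2var (s t : ℝ) (hs0 : 0 ≤ s) (hs1 : s ≤ 1) (ht0 : 0 ≤ t) (ht1 : t ≤ 1) :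
    (1 - s*t)/(1+s*t) ≤ (1-s)/(1+s) + (1-t)/(1+t) := by
  have h1 : (0:ℝ) < 1 + s*t := by nlinarith
  have h2 : (0:ℝ) < 1 + s := by linarith
  have h3 : (0:ℝ) < 1 + t := by linarith
  rw [div_add_div _ _ (ne_of_gt h2) (ne_of_gt h3), div_le_div_iff₀ h1 (by positivity)]
  have hst1 : s*t ≤ 1 := by nlinarith
  nlinarith [mul_nonneg (mul_nonneg (sub_nonneg.2 hst1) (sub_nonneg.2 hs1)) (sub_nonneg.2 ht1)]

lemma lemprod {ι : Type*} [DecidableEq ι] (s : Finset ι) (t : ι → ℝ)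
    (h0 : ∀ i ∈ s, 0 ≤ t i) (h1 : ∀ i ∈ s, t i ≤ 1) :
    (1 - ∏ i ∈ s, t i)/(1 + ∏ i ∈ s, t i) ≤ ∑ i ∈ s, (1 - t i)/(1 + t i) := by
  induction s using Finset.cons_induction with
  | empty => simp
  | cons a s ha ih =>
    rw [Finset.prod_cons, Finset.sum_cons]
    have hp0 : 0 ≤ ∏ i ∈ s, t i :=
      Finset.prod_nonneg fun i hi => h0 i (Finset.mem_cons_of_mem hi)
    have hp1 : ∏ i ∈ s, t i ≤ 1 :=
      Finset.prod_le_one (fun i hi => h0 i (Finset.mem_cons_of_mem hi))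
        (fun i hi => h1 i (Finset.mem_cons_of_mem hi))
    have ha0 := h0 a (Finset.mem_cons_self a s)
    have ha1 := h1 a (Finset.mem_cons_self a s)
    calc (1 - t a * ∏ i ∈ s, t i)/(1 + t a * ∏ i ∈ s, t i)
        ≤ (1 - t a)/(1 + t a) + (1 - ∏ i ∈ s, t i)/(1 + ∏ i ∈ s, t i) :=
          lem2var _ _ ha0 ha1 hp0 hp1
      _ ≤ (1 - t a)/(1 + t a) + ∑ i ∈ s, (1 - t i)/(1 + t i) :=
          add_le_add le_rfl (ih (fun i hi => h0 i (Finset.mem_cons_of_mem hi))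
            (fun i hi => h1 i (Finset.mem_cons_of_mem hi)))

lemma lemA (z b : ℂ) (hz : ‖z‖ = 1) (hb : ‖b‖ ≤ 1) (hne : z ≠ b) :
    1 / (1 + ‖b‖) ≤ (z/(z-b)).re := by
  have hq : 0 < Complex.normSq (z - b) := Complex.normSq_pos.2 (sub_ne_zero.2 hne)
  have hzz : z.re*z.re + z.im*z.im = 1 := by
    have := Complex.sq_norm z; rw [hz] at this
    rw [Complex.normSq_apply] at this; nlinarith
  have hbb : b.re*b.re + b.im*b.im = (‖b‖)^2 := by
    rw [Complex.sq_norm, Complex.normSq_apply]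
  have hβ0 : 0 ≤ ‖b‖ := norm_nonneg b
  have hqe : Complex.normSq (z - b) = (z.re - b.re)^2 + (z.im - b.im)^2 := by
    rw [Complex.normSq_apply, Complex.sub_re, Complex.sub_im]; ring
  have hr2 : (z.re*b.re + z.im*b.im)^2 ≤ (‖b‖)^2 := by
    nlinarith [sq_nonneg (z.re*b.im - z.im*b.re)]
  have hr : -(‖b‖) ≤ z.re*b.re + z.im*b.im := by nlinarith
  rw [Complex.div_re, ← add_div, div_le_div_iff₀ (by linarith) hq]
  rw [Complex.sub_re, Complex.sub_im]
  nlinarith [mul_nonneg (sub_nonneg.2 hb)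
    (by linarith : (0:ℝ) ≤ ‖b‖ + (z.re*b.re + z.im*b.im))]

lemma lemB (z a : ℂ) (hz : ‖z‖ = 1) (hne : z ≠ a) :
    (z/(z-a)).re = 1/2 - (Complex.normSq a - 1)/(2 * Complex.normSq (z - a)) := by
  have hq : 0 < Complex.normSq (z - a) := Complex.normSq_pos.2 (sub_ne_zero.2 hne)
  have hzz : z.re*z.re + z.im*z.im = 1 := by
    have := Complex.sq_norm z; rw [hz] at this
    rw [Complex.normSq_apply] at this; nlinarith
  have hqe : Complex.normSq (z - a) = (z.re - a.re)^2 + (z.im - a.im)^2 := by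
    rw [Complex.normSq_apply, Complex.sub_re, Complex.sub_im]; ring
  have hae : Complex.normSq a = a.re^2 + a.im^2 := by rw [Complex.normSq_apply]; ring
  rw [Complex.div_re, Complex.sub_re, Complex.sub_im, hqe, hae]
  have hq' : (0:ℝ) < (z.re - a.re)^2 + (z.im - a.im)^2 := by rw [← hqe]; exact hq
  field_simp
  ring_nf
  nlinarith [hzz, hq']

theorem stmt14 (n m : ℕ) (hn : 0 < n) (hm : m ≤ n)
    (a : Fin n → ℂ) (ha : ∀ j, 1 < ‖a j‖)
    (b : Fin m → ℂ) (hb : ∀ j, ‖b j‖ ≤ 1)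
    (α : ℕ → ℂ) (hαm : α m ≠ 0)
    (W B P R : ℂ → ℂ)
    (hW : ∀ z, W z = ∏ j, (z - a j))
    (hB : ∀ z, B z = ∏ j, (1 - (starRingEnd ℂ) (a j) * z) / (z - a j))
    (hP : ∀ z, P z = α m * ∏ j, (z - b j))
    (hPsum : ∀ z, P z = ∑ i ∈ Finset.range (m + 1), α i * z ^ i)
    (hR : ∀ z, R z = P z / W z)
    (z : ℂ) (hz : ‖z‖ = 1) :
    (1 / 2) * (‖deriv B z‖
          - ((n : ℝ) - (m : ℝ))
          + (‖α m‖ - ‖α 0‖)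
              / (‖α m‖ + ‖α 0‖))
        * ‖R z‖
      ≤ ‖deriv R z‖ := by
  classical
  by_cases hRz : R z = 0
  · rw [hRz]
    simp only [norm_zero, mul_zero]
    exact norm_nonneg _
  -- nonvanishing facts
  have hane : ∀ j, z - a j ≠ 0 := fun j h =>
    absurd (ha j) (by rw [← sub_eq_zero.mp h, hz]; norm_num)
  have hWzne : W z ≠ 0 := by
    rw [hW z]; exact Finset.prod_ne_zero_iff.2 fun j _ => hane j
  have hPzne : P z ≠ 0 := fun h => hRz (by rw [hR z, h, zero_div])
  have hbne : ∀ i, z - b i ≠ 0 := by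
    intro i
    have := hPzne
    rw [hP z] at this
    have h2 := (mul_ne_zero_iff.1 this).2
    exact Finset.prod_ne_zero_iff.1 h2 i (Finset.mem_univ i)
  have hbne' : ∀ i, z ≠ b i := fun i => sub_ne_zero.1 (hbne i)
  have hane' : ∀ j, z ≠ a j := fun j => sub_ne_zero.1 (hane j)
  -- derivative of B
  set g : Fin n → ℂ → ℂ := fun j w => (1 - (starRingEnd ℂ) (a j) * w) / (w - a j) with hg
  set d : Fin n → ℂ := fun j => ((starRingEnd ℂ) (a j) * a j - 1) / (z - a j)^2 with hd
  have hgd : ∀ j, HasDerivAt (g j) (d j) z := by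
    intro j
    have h1 : HasDerivAt (fun w => 1 - (starRingEnd ℂ) (a j) * w) (-(starRingEnd ℂ) (a j)) z := by
      simpa using (((hasDerivAt_id z).const_mul ((starRingEnd ℂ) (a j))).const_sub 1)
    have h2 : HasDerivAt (fun w => w - a j) 1 z := (hasDerivAt_id z).sub_const _
    have h3 := h1.div h2 (hane j)
    have h4 : (-(starRingEnd ℂ) (a j) * (z - a j) - (1 - (starRingEnd ℂ) (a j) * z) * 1)
        / (z - a j)^2 = d j := by rw [hd]; ring_nf
    rw [h4] at h3
    exact h3
  have hBd : HasDerivAt B (∑ i, (∏ j ∈ univ.erase i, g j z) • d i) z := by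
    have h := HasDerivAt.finset_prod (u := univ) (f := g) (f' := d) (fun i _ => hgd i)
    have hBeq : B = fun w => ∏ j, g j w := funext fun w => hB w
    rw [hBeq]
    rw [Finset.prod_fn] at h
    exact h
  set s : Fin n → ℝ := fun j => (Complex.normSq (a j) - 1) / Complex.normSq (z - a j) with hs
  have hnormSqa : ∀ j, 1 < Complex.normSq (a j) := by
    intro j
    rw [← Complex.sq_norm]
    nlinarith [ha j]
  have habsg : ∀ j, ‖g j z‖ = 1 := by
    intro j
    have hz2 : z * (starRingEnd ℂ) z = 1 := by
      rw [Complex.mul_conj, Complex.normSq_eq_norm_sq, hz]; norm_num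
    have key : 1 - (starRingEnd ℂ) (a j) * z = z * (starRingEnd ℂ) (z - a j) := by
      rw [map_sub]; rw [mul_sub, hz2]; ring
    show ‖(1 - (starRingEnd ℂ) (a j) * z) / (z - a j)‖ = 1
    rw [norm_div, key, norm_mul, Complex.norm_conj, hz, one_mul,
      div_self (norm_ne_zero_iff.2 (hane j))]
  have habsd : ∀ j, ‖d j‖ = s j := by
    intro j
    have hnum : (starRingEnd ℂ) (a j) * a j - 1 = ((Complex.normSq (a j) - 1 : ℝ) : ℂ) := by
      rw [mul_comm, Complex.mul_conj]; push_cast; ring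
    rw [hd]
    show ‖((starRingEnd ℂ) (a j) * a j - 1) / (z - a j)^2‖ = s j
    rw [norm_div, norm_pow, Complex.sq_norm, hnum, Complex.norm_real, Real.norm_eq_abs,
      abs_of_nonneg (by linarith [hnormSqa j])]
  have hSb : ‖deriv B z‖ ≤ ∑ j, s j := by
    rw [hBd.deriv]
    refine le_trans (norm_sum_le _ _) (le_of_eq ?_)
    refine Finset.sum_congr rfl fun i _ => ?_
    rw [smul_eq_mul, norm_mul, habsd i]
    have : ‖∏ j ∈ univ.erase i, g j z‖ = 1 := by
      rw [norm_prod]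
      exact Finset.prod_eq_one fun j _ => habsg j
    rw [this, one_mul]
  -- derivatives of P and W
  have hprodb : HasDerivAt (fun w => ∏ j, (w - b j)) (∑ i, ∏ j ∈ univ.erase i, (z - b j)) z := by
    have h := HasDerivAt.finset_prod (u := (univ : Finset (Fin m)))
      (f := fun j w => w - b j) (f' := fun _ => 1)
      (fun i _ => (hasDerivAt_id z).sub_const _)
    simpa [Finset.prod_fn] using h
  have hPd : HasDerivAt P (α m * ∑ i, ∏ j ∈ univ.erase i, (z - b j)) z := by
    have h := hprodb.const_mul (α m)
    have hPeq : P = fun w => α m * ∏ j, (w - b j) := funext fun w => hP w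
    rw [hPeq]
    exact h
  have hWd : HasDerivAt W (∑ i, ∏ j ∈ univ.erase i, (z - a j)) z := by
    have h := HasDerivAt.finset_prod (u := (univ : Finset (Fin n)))
      (f := fun j w => w - a j) (f' := fun _ => 1)
      (fun i _ => (hasDerivAt_id z).sub_const _)
    have hWeq : W = fun w => ∏ j, (w - a j) := funext fun w => hW w
    rw [hWeq]
    simpa [Finset.prod_fn] using h
  have hRd : HasDerivAt R (((α m * ∑ i, ∏ j ∈ univ.erase i, (z - b j)) * W z
      - P z * ∑ i, ∏ j ∈ univ.erase i, (z - a j)) / (W z)^2) z := by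
    have h := hPd.div hWd hWzne
    have hReq : R = fun w => P w / W w := funext fun w => hR w
    rw [hReq]
    exact h
  -- logarithmic derivative identity
  have hQbne : ∀ i : Fin m, (∏ j ∈ univ.erase i, (z - b j)) ≠ 0 :=
    fun i => Finset.prod_ne_zero_iff.2 fun j _ => hbne j
  have hQane : ∀ i : Fin n, (∏ j ∈ univ.erase i, (z - a j)) ≠ 0 :=
    fun i => Finset.prod_ne_zero_iff.2 fun j _ => hane j
  have hsb : ∑ i, z / (z - b i) = z * ((∑ i, ∏ j ∈ univ.erase i, (z - b j)) / ∏ j, (z - b j)) := by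
    rw [Finset.sum_div, Finset.mul_sum]
    refine Finset.sum_congr rfl fun i _ => ?_
    rw [← Finset.mul_prod_erase _ _ (Finset.mem_univ i)]
    rw [div_mul_cancel_right₀ (hQbne i), div_eq_mul_inv]
  have hsa : ∑ j, z / (z - a j)
      = z * ((∑ i, ∏ j ∈ univ.erase i, (z - a j)) / ∏ j, (z - a j)) := by
    rw [Finset.sum_div, Finset.mul_sum]
    refine Finset.sum_congr rfl fun i _ => ?_
    rw [← Finset.mul_prod_erase _ _ (Finset.mem_univ i)]
    rw [div_mul_cancel_right₀ (hQane i), div_eq_mul_inv]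
  have hPBne : (∏ j, (z - b j)) ≠ 0 := Finset.prod_ne_zero_iff.2 fun j _ => hbne j
  have hWAne : (∏ j, (z - a j)) ≠ 0 := Finset.prod_ne_zero_iff.2 fun j _ => hane j
  have hL : z * deriv R z / R z = (∑ i, z / (z - b i)) - ∑ j, z / (z - a j) := by
    rw [hRd.deriv, hR z, hsb, hsa, hP z, hW z]
    field_simp
  -- real parts
  have hre : (z * deriv R z / R z).re
      = (∑ i, (z / (z - b i)).re) - ∑ j, (z / (z - a j)).re := by
    rw [hL, Complex.sub_re, Complex.re_sum, Complex.re_sum]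
  set πb : ℝ := ∏ i, ‖b i‖ with hπ
  have hπ0 : 0 ≤ πb := Finset.prod_nonneg fun i _ => norm_nonneg _
  have hπ1 : πb ≤ 1 := Finset.prod_le_one (fun i _ => norm_nonneg _) (fun i _ => hb i)
  set tv : ℝ := (1 - πb) / (1 + πb) with htv
  have hBsum : (m:ℝ)/2 + tv/2 ≤ ∑ i, (z / (z - b i)).re := by
    have e1 : ∀ i : Fin m, (1:ℝ)/(1 + ‖b i‖)
        = 1/2 + (1 - ‖b i‖)/(1 + ‖b i‖)/2 := by
      intro i
      have h0 : (0:ℝ) < 1 + ‖b i‖ := by positivity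
      field_simp
      ring
    have hpl := lemprod (univ : Finset (Fin m)) (fun i => ‖b i‖)
      (fun i _ => norm_nonneg _) (fun i _ => hb i)
    calc (m:ℝ)/2 + tv/2
        ≤ (m:ℝ)/2 + (∑ i, (1 - ‖b i‖)/(1 + ‖b i‖))/2 := by
          rw [htv, hπ]; linarith [hpl]
      _ = ∑ i, (1:ℝ)/(1 + ‖b i‖) := by
          simp_rw [e1]
          rw [Finset.sum_add_distrib, Finset.sum_const, card_univ, Fintype.card_fin,
            nsmul_eq_mul, ← Finset.sum_div]
          ring
      _ ≤ ∑ i, (z / (z - b i)).re :=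
          Finset.sum_le_sum fun i _ => lemA z (b i) hz (hb i) (hbne' i)
  have hAsum : ∑ j, (z / (z - a j)).re = (n:ℝ)/2 - (∑ j, s j)/2 := by
    have e2 : ∀ j : Fin n, (z / (z - a j)).re = 1/2 - s j / 2 := by
      intro j
      rw [lemB z (a j) hz (hane' j), hs]
      ring
    simp_rw [e2]
    rw [Finset.sum_sub_distrib, Finset.sum_const, card_univ, Fintype.card_fin,
      nsmul_eq_mul, ← Finset.sum_div]
    ring
  have hreL : ((∑ j, s j) - ((n:ℝ) - m) + tv)/2 ≤ (z * deriv R z / R z).re := by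
    rw [hre, hAsum]
    linarith [hBsum]
  -- identify tv with the alpha expression
  have hα0abs : ‖α 0‖ = ‖α m‖ * πb := by
    have h1 : α 0 = P 0 := by
      rw [hPsum 0]
      rw [Finset.sum_eq_single 0]
      · norm_num
      · intro i _ hi
        rw [zero_pow hi, mul_zero]
      · intro h
        exact absurd (Finset.mem_range.2 (Nat.succ_pos m)) h
    rw [h1, hP 0, norm_mul, norm_prod, hπ]
    congr 1
    exact Finset.prod_congr rfl fun j _ => by rw [norm_sub_rev, sub_zero]
  have hαmpos : 0 < ‖α m‖ := norm_pos_iff.2 hαm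
  have htv' : (‖α m‖ - ‖α 0‖)
      / (‖α m‖ + ‖α 0‖) = tv := by
    rw [hα0abs, htv]
    rw [show ‖α m‖ - ‖α m‖ * πb = ‖α m‖ * (1 - πb) by ring,
      show ‖α m‖ + ‖α m‖ * πb = ‖α m‖ * (1 + πb) by ring,
      mul_div_mul_left _ _ (ne_of_gt hαmpos)]
  -- final chain
  have habsL : ‖z * deriv R z / R z‖
      = ‖deriv R z‖ / ‖R z‖ := by
    rw [norm_div, norm_mul, hz, one_mul]
  have hRzpos : 0 < ‖R z‖ := norm_pos_iff.2 hRz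
  calc (1 / 2) * (‖deriv B z‖ - ((n : ℝ) - (m : ℝ))
          + (‖α m‖ - ‖α 0‖)
              / (‖α m‖ + ‖α 0‖)) * ‖R z‖
      ≤ (((∑ j, s j) - ((n:ℝ) - m) + tv)/2) * ‖R z‖ := by
        refine mul_le_mul_of_nonneg_right ?_ (norm_nonneg _)
        rw [htv']
        linarith [hSb]
    _ ≤ (z * deriv R z / R z).re * ‖R z‖ :=
        mul_le_mul_of_nonneg_right hreL (norm_nonneg _)
    _ ≤ ‖z * deriv R z / R z‖ * ‖R z‖ :=
        mul_le_mul_of_nonneg_right (Complex.re_le_norm _) (norm_nonneg _)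
    _ = ‖deriv R z‖ := by
        rw [habsL, div_mul_cancel₀ _ (ne_of_gt hRzpos)]
end

section
/- Suppose R ∈ R_n has all its zeros in |z| ≤ 1; that is, R(z) = P(z)/W(z) with P(z) = α_m ∏_{j=1}^m (z − b_j) = α_0 + α_1 z + ⋯ + α_m z^m, α_m ≠ 0, m ≤ n, and |b_j| ≤ 1 for j = 1, …, m. Then for every z with |z| = 1, |R′(z)| ≥ (1/2)·[ |B′(z)| − (n − m) + (√|α_m| − √|α_0|)/√|α_m| ]·|R(z)|. -/
open Finset

lemma sqrt_prod' {ι : Type*} [DecidableEq ι] (s : Finset ι) (f : ι → ℝ) (h : ∀ i ∈ s, 0 ≤ f i) :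
    Real.sqrt (∏ i ∈ s, f i) = ∏ i ∈ s, Real.sqrt (f i) := by
  induction s using Finset.induction_on with
  | empty => simp
  | insert a s hx ih =>
    rw [Finset.prod_insert hx, Finset.prod_insert hx,
      Real.sqrt_mul (h a (mem_insert_self a s)), ih (fun i hi => h i (mem_insert_of_mem hi))]

lemma one_sub_sum_le_prod {ι : Type*} [DecidableEq ι] (s : Finset ι) (f : ι → ℝ)
    (h0 : ∀ i ∈ s, 0 ≤ f i) (h1 : ∀ i ∈ s, f i ≤ 1) :
    1 - ∑ i ∈ s, (1 - f i) ≤ ∏ i ∈ s, f i := by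
  induction s using Finset.induction_on with
  | empty => simp
  | insert a s hx ih =>
    have ha0 := h0 a (mem_insert_self a s)
    have ha1 := h1 a (mem_insert_self a s)
    have ih' := ih (fun i hi => h0 i (mem_insert_of_mem hi)) (fun i hi => h1 i (mem_insert_of_mem hi))
    have hs0 : (0:ℝ) ≤ ∑ i ∈ s, (1 - f i) :=
      Finset.sum_nonneg fun i hi => by linarith [h1 i (mem_insert_of_mem hi)]
    have hp1 : ∏ i ∈ s, f i ≤ 1 :=
      Finset.prod_le_one (fun i hi => h0 i (mem_insert_of_mem hi)) (fun i hi => h1 i (mem_insert_of_mem hi))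
    rw [Finset.prod_insert hx, Finset.sum_insert hx]
    nlinarith

lemma re_div_shift (z w : ℂ) (hz : ‖z‖ = 1) (hw : z - w ≠ 0) :
    (z/(z-w)).re = 1/2 + (1 - Complex.normSq w)/(2 * Complex.normSq (z - w)) := by
  have hn : Complex.normSq (z - w) ≠ 0 := by
    simpa [Complex.normSq_eq_zero] using hw
  have hz2 : z.re^2 + z.im^2 = 1 := by
    have := Complex.sq_norm z
    rw [hz] at this
    simp only [Complex.normSq_apply] at this
    nlinarith [this]
  rw [Complex.div_re]
  simp only [Complex.normSq_apply, Complex.sub_re, Complex.sub_im] at *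
  field_simp
  have hn' : (z.re - w.re) ^ 2 + (z.im - w.im) ^ 2 ≠ 0 := by rw [sq, sq]; exact hn
  rw [one_add_div hn', div_left_inj' hn']
  linear_combination hz2

lemma re_b_bound (z w : ℂ) (hz : ‖z‖ = 1) (hw : ‖w‖ ≤ 1)
    (hzw : z - w ≠ 0) :
    1/2 + (1 - Real.sqrt (‖w‖))/2 ≤ (z/(z-w)).re := by
  rw [re_div_shift z w hz hzw]
  have ht0 : 0 ≤ Real.sqrt (‖w‖) := Real.sqrt_nonneg _
  have ht1 : Real.sqrt (‖w‖) ≤ 1 := by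
    rw [show (1:ℝ) = Real.sqrt 1 by simp]
    exact Real.sqrt_le_sqrt hw
  set t := Real.sqrt (‖w‖) with hts
  have htw : ‖w‖ = t^2 := (Real.sq_sqrt (norm_nonneg w)).symm
  have hd0 : 0 < Complex.normSq (z - w) := by
    rwa [Complex.normSq_pos]
  have hdle : Complex.normSq (z - w) ≤ (1 + t^2)^2 := by
    have h1 : ‖z - w‖ ≤ 1 + t^2 := by
      calc ‖z - w‖ ≤ ‖z‖ + ‖w‖ := by
            simpa [sub_eq_add_neg] using norm_add_le z (-w)
      _ = 1 + t^2 := by rw [hz, htw]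
    have := Complex.sq_norm (z - w)
    nlinarith [norm_nonneg (z - w)]
  have hnw : Complex.normSq w = t^4 := by
    have := Complex.sq_norm w
    rw [htw] at this
    nlinarith
  rw [hnw]
  have key : (1 - t)/2 ≤ (1 - t^4)/(2 * Complex.normSq (z - w)) := by
    rw [div_le_div_iff₀ (by norm_num) (by positivity)]
    nlinarith [mul_nonneg (sub_nonneg.2 ht1) (sub_nonneg.2 hdle),
      mul_nonneg ht0 (sq_nonneg (1 - t)), sq_nonneg t, sq_nonneg (1 - t)]
  linarith

theorem stmt15 (n m : ℕ) (hn : 0 < n) (hm : m ≤ n)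
    (a : Fin n → ℂ) (ha : ∀ j, 1 < ‖a j‖)
    (b : Fin m → ℂ) (hb : ∀ j, ‖b j‖ ≤ 1)
    (α : ℕ → ℂ) (hαm : α m ≠ 0)
    (W B P R : ℂ → ℂ)
    (hW : ∀ z, W z = ∏ j, (z - a j))
    (hB : ∀ z, B z = ∏ j, (1 - (starRingEnd ℂ) (a j) * z) / (z - a j))
    (hP : ∀ z, P z = α m * ∏ j, (z - b j))
    (hPsum : ∀ z, P z = ∑ i ∈ Finset.range (m + 1), α i * z ^ i)
    (hR : ∀ z, R z = P z / W z)
    (z : ℂ) (hz : ‖z‖ = 1) :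
    (1 / 2) * (‖deriv B z‖
          - ((n : ℝ) - (m : ℝ))
          + (Real.sqrt (‖α m‖) - Real.sqrt (‖α 0‖))
              / Real.sqrt (‖α m‖))
        * ‖R z‖
      ≤ ‖deriv R z‖ := by
  by_cases hR0 : R z = 0
  · rw [hR0]
    simp
  -- basic facts
  have hz0 : z ≠ 0 := by
    intro h; rw [h] at hz; simp at hz
  have hzc : z * (starRingEnd ℂ) z = 1 := by
    rw [Complex.mul_conj]
    rw [Complex.normSq_eq_norm_sq, hz]
    norm_num
  have hcz : (starRingEnd ℂ) z = z⁻¹ :=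
    eq_inv_of_mul_eq_one_left (by rw [mul_comm]; exact hzc)
  have haz : ∀ j, z - a j ≠ 0 := by
    intro j h
    have : z = a j := by linear_combination h
    rw [this] at hz
    exact absurd hz (by have := ha j; linarith)
  have hWz : W z ≠ 0 := by
    rw [hW z]
    exact Finset.prod_ne_zero_iff.2 fun j _ => haz j
  have hPz : P z ≠ 0 := by
    intro h
    exact hR0 (by rw [hR z, h, zero_div])
  have hbz : ∀ j, z - b j ≠ 0 := by
    intro j
    intro h
    apply hPz
    rw [hP z]
    rw [Finset.prod_eq_zero (mem_univ j) h, mul_zero]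
  -- the real quantity S
  set S : ℝ := ∑ j, (Complex.normSq (a j) - 1) / Complex.normSq (z - a j) with hSdef
  have hterm_pos : ∀ j : Fin n, 0 < (Complex.normSq (a j) - 1) / Complex.normSq (z - a j) := by
    intro j
    apply div_pos
    · have := ha j
      have h2 := Complex.sq_norm (a j)
      nlinarith
    · rw [Complex.normSq_pos]; exact haz j
  have hS0 : 0 ≤ S := Finset.sum_nonneg fun j _ => (hterm_pos j).le
  -- derivatives
  have hWd : HasDerivAt W (∑ j, ∏ k ∈ univ.erase j, (z - a k)) z := by
    rw [funext hW]
    have := HasDerivAt.fun_finsetProd (u := univ) (f := fun (j : Fin n) w => w - a j)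
      (f' := fun _ => (1:ℂ)) (x := z) (fun j _ => (hasDerivAt_id z).sub_const (a j))
    simpa using this
  have hPd : HasDerivAt P (α m * ∑ j, ∏ k ∈ univ.erase j, (z - b k)) z := by
    rw [funext hP]
    have := HasDerivAt.fun_finsetProd (u := univ) (f := fun (j : Fin m) w => w - b j)
      (f' := fun _ => (1:ℂ)) (x := z) (fun j _ => (hasDerivAt_id z).sub_const (b j))
    simpa using this.const_mul (α m)
  have hfd : ∀ j : Fin n, HasDerivAt (fun w => (1 - (starRingEnd ℂ) (a j) * w)/(w - a j))
      (((starRingEnd ℂ) (a j) * a j - 1)/(z - a j)^2) z := by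
    intro j
    have h1 : HasDerivAt (fun w : ℂ => 1 - (starRingEnd ℂ) (a j) * w) (-((starRingEnd ℂ) (a j))) z := by
      simpa using ((hasDerivAt_id z).const_mul ((starRingEnd ℂ) (a j))).const_sub 1
    have h2 : HasDerivAt (fun w : ℂ => w - a j) 1 z := (hasDerivAt_id z).sub_const (a j)
    have := h1.fun_div h2 (haz j)
    exact this.congr_deriv (by ring)
  have hBd : HasDerivAt B (∑ j, (∏ k ∈ univ.erase j, ((1 - (starRingEnd ℂ) (a k) * z)/(z - a k)))
      * (((starRingEnd ℂ) (a j) * a j - 1)/(z - a j)^2)) z := by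
    rw [funext hB]
    have := HasDerivAt.fun_finsetProd (u := univ)
      (f := fun (j : Fin n) w => (1 - (starRingEnd ℂ) (a j) * w)/(w - a j))
      (f' := fun j => ((starRingEnd ℂ) (a j) * a j - 1)/(z - a j)^2) (x := z)
      (fun j _ => hfd j)
    simpa [smul_eq_mul] using this
  -- logarithmic derivative identities
  set TW : ℂ := ∑ j, z / (z - a j) with hTWdef
  set TP : ℂ := ∑ j, z / (z - b j) with hTPdef
  have hWlog : z * deriv W z = TW * W z := by
    rw [hWd.deriv, hW z, hTWdef, Finset.sum_mul]
    simp only [Finset.mul_sum]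
    apply Finset.sum_congr rfl
    intro j _
    rw [← Finset.mul_prod_erase univ _ (mem_univ j)]
    field_simp [haz j]
  have hPlog : z * deriv P z = TP * P z := by
    rw [hPd.deriv, hP z, hTPdef, Finset.sum_mul]
    simp only [Finset.mul_sum]
    apply Finset.sum_congr rfl
    intro j _
    rw [← Finset.mul_prod_erase univ _ (mem_univ j)]
    field_simp [hbz j]
  -- B identities
  have hBkey : ∀ j : Fin n, (((starRingEnd ℂ) (a j) * a j - 1)/(z - a j)^2) * z
      = (((Complex.normSq (a j) - 1) / Complex.normSq (z - a j) : ℝ) : ℂ)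
        * ((1 - (starRingEnd ℂ) (a j) * z)/(z - a j)) := by
    intro j
    have h1 : ((Complex.normSq (z - a j) : ℝ) : ℂ) = (z - a j) * (starRingEnd ℂ) (z - a j) :=
      (Complex.mul_conj _).symm
    have h2 : ((Complex.normSq (a j) : ℝ) : ℂ) = a j * (starRingEnd ℂ) (a j) :=
      (Complex.mul_conj _).symm
    have hns : ((Complex.normSq (z - a j) : ℝ) : ℂ) ≠ 0 := by
      simpa [Complex.ofReal_eq_zero, Complex.normSq_eq_zero] using haz j
    have hcne : (starRingEnd ℂ) (z - a j) ≠ 0 := fun h => haz j (by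
      have := congrArg (starRingEnd ℂ) h
      simpa using this)
    rw [Complex.ofReal_div, Complex.ofReal_sub, Complex.ofReal_one, h1, h2]
    rw [div_mul_div_comm, div_mul_eq_mul_div,
      div_eq_div_iff (pow_ne_zero 2 (haz j)) (mul_ne_zero (mul_ne_zero (haz j) hcne) (haz j))]
    rw [map_sub]
    linear_combination (((starRingEnd ℂ) (a j)) * a j - 1) * (z - a j)^2 * hzc
  have hBz : z * deriv B z = ((S : ℝ) : ℂ) * B z := by
    rw [hBd.deriv, Finset.mul_sum]
    have step : ∀ j ∈ (univ : Finset (Fin n)),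
        z * ((∏ k ∈ univ.erase j, ((1 - (starRingEnd ℂ) (a k) * z)/(z - a k)))
          * (((starRingEnd ℂ) (a j) * a j - 1)/(z - a j)^2))
        = (((Complex.normSq (a j) - 1) / Complex.normSq (z - a j) : ℝ) : ℂ) * B z := by
      intro j _
      rw [hB z, ← Finset.mul_prod_erase univ
        (fun k => (1 - (starRingEnd ℂ) (a k) * z)/(z - a k)) (mem_univ j)]
      rw [mul_comm z, mul_assoc, hBkey j]
      ring
    rw [Finset.sum_congr rfl step, ← Finset.sum_mul, ← Complex.ofReal_sum, hSdef]
  have hBabs : ‖B z‖ = 1 := by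
    rw [hB z, norm_prod]
    apply Finset.prod_eq_one
    intro j _
    rw [norm_div]
    have hnum : 1 - (starRingEnd ℂ) (a j) * z = z * (starRingEnd ℂ) (z - a j) := by
      rw [map_sub, mul_sub, hzc]
      ring
    rw [hnum, norm_mul, Complex.norm_conj, hz, one_mul]
    exact div_self (norm_ne_zero_iff.2 (haz j))
  have habsBd : ‖deriv B z‖ = S := by
    have h1 : ‖z * deriv B z‖ = ‖deriv B z‖ := by
      rw [norm_mul, hz, one_mul]
    rw [← h1, hBz, norm_mul, Complex.norm_of_nonneg hS0, hBabs, mul_one]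
  -- R derivative
  have hRd : HasDerivAt R ((deriv P z * W z - P z * deriv W z) / W z ^ 2) z := by
    have h1 : HasDerivAt P (deriv P z) z := hPd.differentiableAt.hasDerivAt
    have h2 : HasDerivAt W (deriv W z) z := hWd.differentiableAt.hasDerivAt
    rw [funext hR]
    exact h1.div h2 hWz
  have hRlog : z * deriv R z = (TP - TW) * R z := by
    have e : z * deriv R z = (z * deriv P z * W z - P z * (z * deriv W z)) / W z ^ 2 := by
      rw [hRd.deriv]; ring
    rw [e, hPlog, hWlog, hR z]
    field_simp
  have habsR : ‖deriv R z‖ = ‖TP - TW‖ * ‖R z‖ := by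
    rw [← one_mul (‖deriv R z‖), ← hz, ← norm_mul, hRlog, norm_mul]
  -- the alpha coefficient identity
  have hα0P : ‖α 0‖ = ‖α m‖ * ∏ j, ‖b j‖ := by
    have hs : P 0 = α 0 := by
      rw [hPsum 0]
      simp [Finset.sum_range_succ']
    have h0 : α 0 = α m * ∏ j, (0 - b j) := by rw [← hs, hP 0]
    rw [h0, norm_mul, norm_prod]
    congr 1
    apply Finset.prod_congr rfl
    intro j _
    simp
  have hAm : 0 < Real.sqrt (‖α m‖) := Real.sqrt_pos.2 (norm_pos_iff.2 hαm)
  have hprodsqrt : Real.sqrt (‖α 0‖)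
      = Real.sqrt (‖α m‖) * ∏ j, Real.sqrt (‖b j‖) := by
    rw [hα0P, Real.sqrt_mul (norm_nonneg _),
      sqrt_prod' univ _ (fun j _ => norm_nonneg _)]
  have hE : (Real.sqrt (‖α m‖) - Real.sqrt (‖α 0‖))
      / Real.sqrt (‖α m‖) = 1 - ∏ j, Real.sqrt (‖b j‖) := by
    rw [hprodsqrt]
    field_simp
  -- real parts
  have hTWre : TW.re = (n : ℝ)/2 - S/2 := by
    rw [hTWdef, Complex.re_sum]
    rw [Finset.sum_congr rfl (fun j _ => re_div_shift z (a j) hz (haz j))]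
    rw [Finset.sum_add_distrib, Finset.sum_const, Finset.card_univ, Fintype.card_fin,
      nsmul_eq_mul]
    have hh : ∑ j : Fin n, (1 - Complex.normSq (a j))/(2 * Complex.normSq (z - a j))
        = ∑ j : Fin n, -((Complex.normSq (a j) - 1)/Complex.normSq (z - a j)/2) := by
      apply Finset.sum_congr rfl
      intro j _
      ring
    rw [hh, Finset.sum_neg_distrib, ← Finset.sum_div, ← hSdef]
    ring
  have hQ : ∑ j : Fin m, (1 - Real.sqrt (‖b j‖))
      ≥ 1 - ∏ j, Real.sqrt (‖b j‖) := by
    have := one_sub_sum_le_prod univ (fun j : Fin m => Real.sqrt (‖b j‖))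
      (fun j _ => Real.sqrt_nonneg _)
      (fun j _ => by
        rw [show (1:ℝ) = Real.sqrt 1 by simp]
        exact Real.sqrt_le_sqrt (hb j))
    linarith
  have hTPre : (m:ℝ)/2 + (1 - ∏ j, Real.sqrt (‖b j‖))/2 ≤ TP.re := by
    rw [hTPdef, Complex.re_sum]
    have h2 := Finset.sum_le_sum
      (fun j (_ : j ∈ (univ : Finset (Fin m))) => re_b_bound z (b j) hz (hb j) (hbz j))
    have h3 : ∑ j : Fin m, (1/2 + (1 - Real.sqrt (‖b j‖))/2 : ℝ)
        = (m:ℝ)/2 + (∑ j : Fin m, (1 - Real.sqrt (‖b j‖)))/2 := by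
      rw [Finset.sum_add_distrib, Finset.sum_const, Finset.card_univ, Fintype.card_fin,
        nsmul_eq_mul, ← Finset.sum_div]
      ring
    rw [h3] at h2
    linarith
  have hre : (TP - TW).re ≤ ‖TP - TW‖ := Complex.re_le_norm _
  rw [Complex.sub_re] at hre
  rw [habsBd, habsR, hE]
  refine mul_le_mul_of_nonneg_right ?_ (norm_nonneg _)
  linarith
end

section
/- If x_1, …, x_n are real numbers with 0 ≤ x_j ≤ 1 for every j = 1, …, n, then Σ_{j=1}^n (1 − x_j)/(1 + x_j) ≥ (1 − ∏_{j=1}^n x_j)/(1 + ∏_{j=1}^n x_j). -/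
open Finset

lemma key18 (a b : ℝ) (ha0 : 0 ≤ a) (ha1 : a ≤ 1) (hb0 : 0 ≤ b) (hb1 : b ≤ 1) :
    (1 - a * b) / (1 + a * b) ≤ (1 - a) / (1 + a) + (1 - b) / (1 + b) := by
  have h1 : 0 < 1 + a := by linarith
  have h2 : 0 < 1 + b := by linarith
  have h3 : 0 < 1 + a * b := by positivity
  rw [div_add_div _ _ (ne_of_gt h1) (ne_of_gt h2), div_le_div_iff₀ h3 (by positivity)]
  nlinarith [mul_nonneg (mul_nonneg (by linarith : (0:ℝ) ≤ 1 - a) (by linarith : (0:ℝ) ≤ 1 - b)) (by nlinarith : (0:ℝ) ≤ 1 - a * b)]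

theorem stmt18 (n : ℕ) (x : Fin n → ℝ) (hx0 : ∀ j, 0 ≤ x j) (hx1 : ∀ j, x j ≤ 1) :
    (1 - ∏ j, x j) / (1 + ∏ j, x j) ≤ ∑ j, (1 - x j) / (1 + x j) := by
  induction n with
  | zero => simp
  | succ n ih =>
    have hp0 : 0 ≤ ∏ j, x (Fin.succ j) := Finset.prod_nonneg fun j _ => hx0 _
    have hp1 : ∏ j, x (Fin.succ j) ≤ 1 :=
      Finset.prod_le_one (fun j _ => hx0 _) (fun j _ => hx1 _)
    have hIH := ih (fun j => x (Fin.succ j)) (fun j => hx0 _) (fun j => hx1 _)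
    rw [Fin.prod_univ_succ, Fin.sum_univ_succ]
    calc (1 - x 0 * ∏ j, x (Fin.succ j)) / (1 + x 0 * ∏ j, x (Fin.succ j))
        ≤ (1 - x 0) / (1 + x 0) + (1 - ∏ j, x (Fin.succ j)) / (1 + ∏ j, x (Fin.succ j)) :=
          key18 _ _ (hx0 0) (hx1 0) hp0 hp1
      _ ≤ (1 - x 0) / (1 + x 0) + ∑ j, (1 - x (Fin.succ j)) / (1 + x (Fin.succ j)) := by linarith
end

section
/- If x_1, …, x_n are real numbers with x_j ≥ 1 for every j = 1, …, n, then Σ_{j=1}^n (1 − x_j)/(1 + x_j) ≤ (1 − ∏_{j=1}^n x_j)/(1 + ∏_{j=1}^n x_j). -/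
set_option maxHeartbeats 1000000

open Finset

lemma key (a b : ℝ) (ha : 1 ≤ a) (hb : 1 ≤ b) :
    (1 - a) / (1 + a) + (1 - b) / (1 + b) ≤ (1 - a * b) / (1 + a * b) := by
  have h1 : (0:ℝ) < 1 + a := by linarith
  have h2 : (0:ℝ) < 1 + b := by linarith
  have h3 : (0:ℝ) < 1 + a * b := by nlinarith
  rw [div_add_div _ _ (ne_of_gt h1) (ne_of_gt h2), div_le_div_iff₀ (by positivity) h3]
  nlinarith [mul_nonneg (sub_nonneg.2 ha) (sub_nonneg.2 hb), mul_pos h1 h2]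

theorem stmt19 (n : ℕ) (x : Fin n → ℝ) (hx : ∀ j, 1 ≤ x j) :
    ∑ j, (1 - x j) / (1 + x j) ≤ (1 - ∏ j, x j) / (1 + ∏ j, x j) := by
  induction n with
  | zero => simp
  | succ m ih =>
    rw [Fin.sum_univ_succ, Fin.prod_univ_succ]
    have hxs : ∀ j : Fin m, 1 ≤ x j.succ := fun j => hx _
    have hp : 1 ≤ ∏ j, x (Fin.succ j) := by
      calc (1:ℝ) = ∏ _j : Fin m, 1 := by simp
        _ ≤ _ := Finset.prod_le_prod (fun i _ => zero_le_one) (fun i _ => hxs i)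
    refine le_trans (add_le_add_right (ih (fun j => x j.succ) hxs) _) ?_
    exact key _ _ (hx 0) hp
end
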